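/- arXiv:2011.00352 — 8 statements merged into one kernel-verified Lean document; each statement's English description precedes it below -/
import Mathlib

section
/- Let P be a poset whose incomparability graph Inc(P) contains finite induced paths of unbounded length (for every n there is an induced path of length n in Inc(P)). Then Inc(P) embeds a direct sum of finite induced paths of unbounded length or a complete sum of finite induced paths of unbounded length. -/
open SimpleGraph

/-- An induced path of length `n` in `G`: an injective sequence of `n+1` vertices,
adjacent exactly when consecutive. -/
def IsInducedPath {V : Type*} (G : SimpleGraph V) {n : ℕ} (x : Fin (n + 1) → V) : Prop :=
  Function.Injective x ∧ ∀ i j, G.Adj (x i) (x j) ↔ Nat.dist i.val j.val = 1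

/-- `G` contains finite induced paths of unbounded length. -/
def HasUnboundedPaths {V : Type*} (G : SimpleGraph V) : Prop :=
  ∀ n : ℕ, ∃ x : Fin (n + 1) → V, IsInducedPath G x

/-- `G` is path-minimal. -/
def PathMinimal {V : Type*} (G : SimpleGraph V) : Prop :=
  HasUnboundedPaths G ∧
    ∀ A : Set V, HasUnboundedPaths (G.induce A) → Nonempty (G ↪g G.induce A)

/-- The age of `G` is contained in the age of `H`. -/
def AgeSubset {V W : Type*} (G : SimpleGraph V) (H : SimpleGraph W) : Prop :=
  ∀ (n : ℕ) (F : SimpleGraph (Fin n)), Nonempty (F ↪g G) → Nonempty (F ↪g H)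

/-- The age of `G` contains no infinite antichain for embeddability. -/
def AgeWQO {V : Type*} (G : SimpleGraph V) : Prop :=
  ∀ f : ℕ → Σ n : ℕ, SimpleGraph (Fin n),
    (∀ i, Nonempty ((f i).2 ↪g G)) →
    ∃ i j, i ≠ j ∧ Nonempty ((f i).2 ↪g (f j).2)

/-- The set `A` carries an induced path of length `n` of `G` (covering all of `A`). -/
def IsPathOn {V : Type*} (G : SimpleGraph V) (A : Set V) (n : ℕ) : Prop :=
  ∃ x : Fin (n + 1) → V, Function.Injective x ∧ Set.range x = A ∧
    ∀ i j, G.Adj (x i) (x j) ↔ Nat.dist i.val j.val = 1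

/-- `G` embeds a direct sum of finite induced paths of unbounded length. -/
def EmbedsDirectSumOfPaths {V : Type*} (G : SimpleGraph V) : Prop :=
  ∃ A : ℕ → Set V, (∀ n, (A n).Finite) ∧
    (∀ m n, m ≠ n → Disjoint (A m) (A n)) ∧
    (∀ m n, m ≠ n → ∀ x ∈ A m, ∀ y ∈ A n, ¬ G.Adj x y) ∧
    ∀ n, ∃ m, n ≤ m ∧ IsPathOn G (A n) m

/-- `G` embeds a complete sum of finite induced paths of unbounded length. -/
def EmbedsCompleteSumOfPaths {V : Type*} (G : SimpleGraph V) : Prop :=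
  ∃ A : ℕ → Set V, (∀ n, (A n).Finite) ∧
    (∀ m n, m ≠ n → Disjoint (A m) (A n)) ∧
    (∀ m n, m ≠ n → ∀ x ∈ A m, ∀ y ∈ A n, G.Adj x y) ∧
    ∀ n, ∃ m, n ≤ m ∧ IsPathOn G (A n) m

/-- An isometric path of length `n` in `G`. -/
def IsIsometricPath {V : Type*} (G : SimpleGraph V) {n : ℕ} (x : Fin (n + 1) → V) : Prop :=
  (∀ i : Fin n, G.Adj (x i.castSucc) (x i.succ)) ∧
  ∀ i j, G.dist (x i) (x j) = Nat.dist i.val j.val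

/-- The set `A` carries an induced path of length `n` of `G` which is isometric in `G`. -/
def IsIsometricPathOn {V : Type*} (G : SimpleGraph V) (A : Set V) (n : ℕ) : Prop :=
  ∃ x : Fin (n + 1) → V, Function.Injective x ∧ Set.range x = A ∧
    (∀ i j, G.Adj (x i) (x j) ↔ Nat.dist i.val j.val = 1) ∧
    (∀ i j, G.dist (x i) (x j) = Nat.dist i.val j.val)

/-- The incomparability graph of a poset. -/
def incGraph (α : Type*) [PartialOrder α] : SimpleGraph α where
  Adj a b := ¬ a ≤ b ∧ ¬ b ≤ a
  symm := ⟨fun _ _ h => ⟨h.2, h.1⟩⟩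
  loopless := ⟨fun _ h => h.1 le_rfl⟩

/-- `w` is a (finite) factor of the infinite word `u`. -/
def IsFactor {A : Type*} (u : ℕ → A) (w : List A) : Prop :=
  ∃ p : ℕ, w = (List.range w.length).map fun i => u (p + i)

/-- `u` is uniformly recurrent. -/
def UniformlyRecurrent {A : Type*} (u : ℕ → A) : Prop :=
  ∀ n : ℕ, ∃ m : ℕ, ∀ v w : List A, IsFactor u v → IsFactor u w →
    v.length = n → w.length = m → v <:+: w

/-- The set of factors of `u` is inexhaustible. -/
def Inexhaustible {A : Type*} (u : ℕ → A) : Prop :=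
  ∀ v v' : List A, IsFactor u v → IsFactor u v' → ∃ w : List A, IsFactor u (v ++ w ++ v')

/-- The path on `n` vertices. -/
def pathG (n : ℕ) : SimpleGraph (Fin n) where
  Adj i j := Nat.dist i.val j.val = 1
  symm := ⟨fun i j h => by rwa [Nat.dist_comm]⟩
  loopless := ⟨fun i h => by simp [Nat.dist_self] at h⟩

/-- The graph `Ĝ_k` on `ℕ × ℕ`. -/
def Ghat (k : ℕ) : SimpleGraph (ℕ × ℕ) where
  Adj a b := (a.1 = b.1 ∧ Nat.dist a.2 b.2 = 1) ∨ (a.1 ≠ b.1 ∧ ¬ a.2 ≡ b.2 [MOD k])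
  symm := by
    constructor
    intro a b h
    rcases h with ⟨h1, h2⟩ | ⟨h1, h2⟩
    · exact Or.inl ⟨h1.symm, by rwa [Nat.dist_comm]⟩
    · exact Or.inr ⟨h1.symm, fun h => h2 h.symm⟩
  loopless := by
    constructor
    intro a h
    rcases h with ⟨_, h2⟩ | ⟨h1, _⟩
    · simp [Nat.dist_self] at h2
    · exact h1 rfl

/-- The vertex set of `Q̂_k`. -/
def Qset : Set (ℕ × ℕ) := {p : ℕ × ℕ | p.2 < p.1 + 5}

/-- The graph `Q̂_k`, induced by `Ĝ_k` on `Qset`. -/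
def Qhat (k : ℕ) : SimpleGraph Qset := (Ghat k).induce Qset

/-- `M` is a module (autonomous set) of `G`. -/
def IsModule {V : Type*} (G : SimpleGraph V) (M : Set V) : Prop :=
  ∀ v ∉ M, (∀ x ∈ M, G.Adj v x) ∨ (∀ x ∈ M, ¬ G.Adj v x)

/-- A trivial subset of a vertex set: empty, a singleton, or everything. -/
def IsTrivialSet {V : Type*} (M : Set V) : Prop :=
  M = ∅ ∨ (∃ v, M = {v}) ∨ M = Set.univ

/-- The graph `Ĝ_{u,⊕}` associated with the word `u : ℕ → Bool` and the Boolean sum. -/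
def GhatXor (u : ℕ → Bool) : SimpleGraph (ℕ × ℕ) where
  Adj a b := (a.1 = b.1 ∧ Nat.dist a.2 b.2 = 1) ∨ (a.1 ≠ b.1 ∧ u a.2 ≠ u b.2)
  symm := by
    constructor
    intro a b h
    rcases h with ⟨h1, h2⟩ | ⟨h1, h2⟩
    · exact Or.inl ⟨h1.symm, by rwa [Nat.dist_comm]⟩
    · exact Or.inr ⟨h1.symm, h2.symm⟩
  loopless := by
    constructor
    intro a h
    rcases h with ⟨_, h2⟩ | ⟨h1, _⟩
    · simp [Nat.dist_self] at h2
    · exact h1 rfl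

/-- The graph `Ĝ_{u,π₂}` associated with the word `u : ℕ → Bool` and the second projection. -/
def GhatPi2 (u : ℕ → Bool) : SimpleGraph (ℕ × ℕ) where
  Adj a b := (a.1 = b.1 ∧ Nat.dist a.2 b.2 = 1) ∨
    (a.1 < b.1 ∧ u b.2 = true) ∨ (b.1 < a.1 ∧ u a.2 = true)
  symm := by
    constructor
    intro a b h
    rcases h with ⟨h1, h2⟩ | ⟨h1, h2⟩ | ⟨h1, h2⟩
    · exact Or.inl ⟨h1.symm, by rwa [Nat.dist_comm]⟩
    · exact Or.inr (Or.inr ⟨h1, h2⟩)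
    · exact Or.inr (Or.inl ⟨h1, h2⟩)
  loopless := by
    constructor
    intro a h
    rcases h with ⟨_, h2⟩ | ⟨h1, _⟩ | ⟨h1, _⟩
    · simp [Nat.dist_self] at h2
    · exact lt_irrefl _ h1
    · exact lt_irrefl _ h1

/-- `u` has a constant factor of length `m`. -/
def HasConstFactor (u : ℕ → Bool) (m : ℕ) : Prop :=
  ∃ p : ℕ, ∀ i < m, u (p + i) = u p


/-!
In `Inc(P)` an induced path `x₀, …, x_L` is oriented: up to reversal, `xᵢ < xⱼ` whenever
`j ≥ i + 2`. Hence, given a point `a`, a long induced path has a long initial block below `a`, a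
long final block above `a`, or a long middle block incomparable to `a`; so if `U` carries
arbitrarily long induced paths, so does the part of `U` below `a`, above `a`, or incomparable
to `a`. Apply this to each vertex of the middle third of a long oriented path in `U`: either the
part of `U` above (below) some middle vertex keeps long paths, and the first (last) third is
comparable to all of it, or the middle third is incomparable to a part of `U` that keeps long
paths. Iterating yields paths of every length, each incomparable to all later ones or comparable
to all later ones; infinitely many of one kind form a complete or a direct sum.
-/

open Filter

lemma Antitone.forall_or_forall {ι : Type*} [Preorder ι] [IsDirected ι (· ≤ ·)]
    {p q : ι → Prop} (hp : Antitone p) (hq : Antitone q) (h : ∀ n, p n ∨ q n) :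
    (∀ n, p n) ∨ ∀ n, q n := by
  by_contra! ⟨⟨a, ha⟩, b, hb⟩
  obtain ⟨c, hac, hbc⟩ := exists_ge_ge a b
  rcases h c with hc | hc
  · exact ha (hp hac hc)
  · exact hb (hq hbc hc)

section Graph

variable {V : Type*}

/-- Only `y 0, …, y L` matter; indexing by `ℕ` keeps all index arithmetic in `ℕ`. -/
def IsInducedPathSeq (G : SimpleGraph V) (L : ℕ) (y : ℕ → V) : Prop :=
  ∀ i ≤ L, ∀ j ≤ L, (y i = y j → i = j) ∧ (G.Adj (y i) (y j) ↔ Nat.dist i j = 1)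

def HasPathIn (G : SimpleGraph V) (U : Set V) (n : ℕ) : Prop :=
  ∃ y, IsInducedPathSeq G n y ∧ ∀ i ≤ n, y i ∈ U

def HasLongPathsIn (G : SimpleGraph V) (U : Set V) : Prop :=
  ∀ n, HasPathIn G U n

variable {G : SimpleGraph V}

namespace IsInducedPathSeq

variable {L : ℕ} {y : ℕ → V}

lemma adj_succ (hy : IsInducedPathSeq G L y) {k : ℕ} (hk : k + 1 ≤ L) :
    G.Adj (y k) (y (k + 1)) :=
  (hy k (by omega) (k + 1) hk).2.2 (by unfold Nat.dist; omega)

lemma of_le (hy : IsInducedPathSeq G L y) {m : ℕ} (hm : m ≤ L) : IsInducedPathSeq G m y :=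
  fun i hi j hj => hy i (hi.trans hm) j (hj.trans hm)

lemma shift (hy : IsInducedPathSeq G L y) {s d : ℕ} (h : s + d ≤ L) :
    IsInducedPathSeq G d (fun i => y (s + i)) := by
  intro i hi j hj
  obtain ⟨hinj, hadj⟩ := hy (s + i) (by omega) (s + j) (by omega)
  have hdist : Nat.dist (s + i) (s + j) = Nat.dist i j := by unfold Nat.dist; omega
  exact ⟨fun he => by have := hinj he; omega, by rw [hadj, hdist]⟩

lemma reverse (hy : IsInducedPathSeq G L y) : IsInducedPathSeq G L (fun i => y (L - i)) := by
  intro i hi j hj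
  obtain ⟨hinj, hadj⟩ := hy (L - i) (by omega) (L - j) (by omega)
  have hdist : Nat.dist (L - i) (L - j) = Nat.dist i j := by unfold Nat.dist; omega
  exact ⟨fun he => by have := hinj he; omega, by rw [hadj, hdist]⟩

lemma isPathOn (hy : IsInducedPathSeq G L y) : IsPathOn G (y '' Set.Iic L) L := by
  refine ⟨fun i => y i, fun i j he => Fin.ext ((hy i (by omega) j (by omega)).1 he), ?_,
    fun i j => (hy i (by omega) j (by omega)).2⟩
  ext v
  constructor
  · rintro ⟨i, rfl⟩
    exact ⟨i, Nat.lt_succ_iff.1 i.2, rfl⟩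
  · rintro ⟨i, hi, rfl⟩
    exact ⟨⟨i, Nat.lt_succ_of_le hi⟩, rfl⟩

end IsInducedPathSeq

lemma HasUnboundedPaths.hasLongPathsIn_univ (h : HasUnboundedPaths G) :
    HasLongPathsIn G Set.univ := by
  intro n
  obtain ⟨x, hinj, hadj⟩ := h n
  refine ⟨fun i => x (Fin.clamp i n), fun i hi j hj => ⟨fun he => ?_, ?_⟩, fun _ _ => trivial⟩
  · have := congrArg Fin.val (hinj he)
    simp only [Fin.clamp] at this
    omega
  · simpa [Fin.clamp, hi, hj] using hadj (Fin.clamp i n) (Fin.clamp j n)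

lemma HasPathIn.mono {U W : Set V} {n : ℕ} (hUW : U ⊆ W) (h : HasPathIn G U n) :
    HasPathIn G W n :=
  let ⟨y, hy, hyU⟩ := h
  ⟨y, hy, fun i hi => hUW (hyU i hi)⟩

lemma HasPathIn.antitone {U : Set V} : Antitone (HasPathIn G U) :=
  fun _ _ hmn ⟨y, hy, hyU⟩ => ⟨y, hy.of_le hmn, fun i hi => hyU i (hi.trans hmn)⟩

lemma HasLongPathsIn.mono {U W : Set V} (hUW : U ⊆ W) (h : HasLongPathsIn G U) :
    HasLongPathsIn G W :=
  fun n => (h n).mono hUW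

lemma exists_sum_of_paths (R : V → V → Prop) (hR : Std.Symm R) (len : ℕ → ℕ)
    (hlen : ∀ n, n ≤ len n) (y : ℕ → ℕ → V) (hy : ∀ n, IsInducedPathSeq G (len n) (y n))
    (hcross : ∀ m n, m < n → ∀ i ≤ len m, ∀ j ≤ len n, y m i ≠ y n j ∧ R (y m i) (y n j)) :
    ∃ A : ℕ → Set V, (∀ n, (A n).Finite) ∧ (∀ m n, m ≠ n → Disjoint (A m) (A n)) ∧
      (∀ m n, m ≠ n → ∀ x ∈ A m, ∀ z ∈ A n, R x z) ∧ ∀ n, ∃ m, n ≤ m ∧ IsPathOn G (A n) m := by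
  have cross : ∀ m n, m ≠ n → ∀ i ≤ len m, ∀ j ≤ len n, y m i ≠ y n j ∧ R (y m i) (y n j) := by
    intro m n hmn i hi j hj
    rcases hmn.lt_or_gt with h | h
    · exact hcross m n h i hi j hj
    · obtain ⟨hne, hr⟩ := hcross n m h j hj i hi
      exact ⟨hne.symm, hR.symm _ _ hr⟩
  refine ⟨fun n => y n '' Set.Iic (len n), fun n => (Set.finite_Iic _).image _, ?_, ?_,
    fun n => ⟨len n, hlen n, (hy n).isPathOn⟩⟩
  · intro m n hmn
    rw [Set.disjoint_left]
    rintro _ ⟨i, hi, rfl⟩ ⟨j, hj, he⟩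
    exact (cross m n hmn i hi j hj).1 he.symm
  · rintro m n hmn _ ⟨i, hi, rfl⟩ _ ⟨j, hj, rfl⟩
    exact (cross m n hmn i hi j hj).2

end Graph

section Poset

variable {α : Type*} [PartialOrder α]

lemma incGraph_toDual_adj {a b : α} :
    (incGraph αᵒᵈ).Adj (OrderDual.toDual a) (OrderDual.toDual b) ↔ (incGraph α).Adj a b :=
  and_comm

lemma ne_and_not_incGraph_adj_of_lt_or_gt {a b : α} (h : a < b ∨ b < a) :
    a ≠ b ∧ ¬ (incGraph α).Adj a b := by
  rcases h with h | h
  · exact ⟨h.ne, fun hab => hab.1 h.le⟩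
  · exact ⟨h.ne', fun hab => hab.2 h.le⟩

def IsOriented (L : ℕ) (y : ℕ → α) : Prop :=
  ∀ i j, i + 2 ≤ j → j ≤ L → y i < y j

namespace IsInducedPathSeq

variable {L : ℕ} {y : ℕ → α}

lemma toDual (hy : IsInducedPathSeq (incGraph α) L y) :
    IsInducedPathSeq (incGraph αᵒᵈ) L (fun i => OrderDual.toDual (y i)) :=
  fun i hi j hj => ⟨fun he => (hy i hi j hj).1 (OrderDual.toDual.injective he),
    incGraph_toDual_adj.trans (hy i hi j hj).2⟩

lemma lt_or_gt (hy : IsInducedPathSeq (incGraph α) L y) {i j : ℕ} (hi : i ≤ L) (hj : j ≤ L)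
    (hij : i ≠ j) (hdist : Nat.dist i j ≠ 1) : y i < y j ∨ y j < y i := by
  obtain ⟨hinj, hadj⟩ := hy i hi j hj
  have hne : y i ≠ y j := mt hinj hij
  have hcomp : y i ≤ y j ∨ y j ≤ y i := by
    by_contra! h
    exact hdist (hadj.1 h)
  exact hcomp.imp (fun h => h.lt_of_ne hne) fun h => h.lt_of_ne hne.symm

lemma lt_add_three (hy : IsInducedPathSeq (incGraph α) L y) {k : ℕ} (hk : k + 3 ≤ L)
    (h : y k < y (k + 2)) : y (k + 1) < y (k + 3) := by
  rcases hy.lt_or_gt (i := k + 1) (j := k + 3) (by omega) hk (by omega)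
    (by unfold Nat.dist; omega) with h' | h'
  · exact h'
  rcases hy.lt_or_gt (i := k) (j := k + 3) (by omega) hk (by omega)
    (by unfold Nat.dist; omega) with h'' | h''
  · exact absurd (h''.trans h').le (hy.adj_succ (k := k) (by omega)).1
  · exact absurd (h''.trans h).le (hy.adj_succ (k := k + 2) hk).2

lemma lt_succ_of_lt (hy : IsInducedPathSeq (incGraph α) L y) {i j : ℕ} (hij : i + 2 ≤ j)
    (hj : j + 1 ≤ L) (h : y i < y j) : y i < y (j + 1) := by
  rcases hy.lt_or_gt (i := i) (j := j + 1) (by omega) hj (by omega)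
    (by unfold Nat.dist; omega) with h' | h'
  · exact h'
  · exact absurd (h'.trans h).le (hy.adj_succ hj).2

lemma isOriented (hy : IsInducedPathSeq (incGraph α) L y) (h : y 0 < y 2) : IsOriented L y := by
  have key : ∀ j, 2 ≤ j → j ≤ L → ∀ i, i + 2 ≤ j → y i < y j := by
    intro j hj
    induction j, hj using Nat.le_induction with
    | base =>
      intro _ i hi
      obtain rfl : i = 0 := by omega
      exact h
    | succ j hj ih =>
      intro hjL i hi
      rcases (show i + 2 ≤ j ∨ i + 1 = j by omega) with hi' | rfl
      · exact hy.lt_succ_of_lt hi' hjL (ih (by omega) i hi')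
      · obtain ⟨k, rfl⟩ : ∃ k, i = k + 1 := ⟨i - 1, by omega⟩
        exact hy.lt_add_three hjL (ih (by omega) k (by omega))
  exact fun i j hij hjL => key j (by omega) hjL i hij

end IsInducedPathSeq

lemma HasPathIn.exists_isOriented {U : Set α} {L : ℕ} (h : HasPathIn (incGraph α) U L) :
    ∃ z, IsInducedPathSeq (incGraph α) L z ∧ (∀ i ≤ L, z i ∈ U) ∧ IsOriented L z := by
  obtain ⟨y, hy, hyU⟩ := h
  by_cases hL : L < 2
  · exact ⟨y, hy, hyU, fun i j hij hjL => by omega⟩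
  rcases hy.lt_or_gt (i := 0) (j := 2) (by omega) (by omega) (by omega)
    (by unfold Nat.dist; omega) with h02 | h20
  · exact ⟨y, hy, hyU, hy.isOriented h02⟩
  · have hdual := hy.toDual.isOriented h20
    exact ⟨fun i => y (L - i), hy.reverse, fun i hi => hyU _ (by omega),
      fun i j hij hjL => hdual (L - j) (L - i) (by omega) (by omega)⟩

lemma HasPathIn.lt_or_gt_or_incGraph_adj {U : Set α} {d : ℕ}
    (h : HasPathIn (incGraph α) U (3 * d + 8)) (a : α) :
    HasPathIn (incGraph α) {u ∈ U | u < a} d ∨ HasPathIn (incGraph α) {u ∈ U | a < u} d ∨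
      HasPathIn (incGraph α) {u ∈ U | (incGraph α).Adj u a} d := by
  obtain ⟨z, hz, hzU, ho⟩ := h.exists_isOriented
  -- The pivots `z (d + 2)` and `z (2d + 6)` separate the blocks `[0, d]`, `[d + 4, 2d + 4]` and
  -- `[2d + 8, 3d + 8]`; by orientation each block lies strictly between the adjacent pivots.
  have block : ∀ (p : α → Prop) (s : ℕ), s + d ≤ 3 * d + 8 →
      (∀ i ≤ d, p (z (s + i))) → HasPathIn (incGraph α) {u ∈ U | p u} d :=
    fun p s hs hp =>
      ⟨fun i => z (s + i), hz.shift hs, fun i hi => ⟨hzU _ (by omega), hp i hi⟩⟩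
  by_cases h₁ : z (d + 2) ≤ a
  · exact Or.inl (block _ 0 (by omega) fun i hi =>
      (ho _ (d + 2) (by omega) (by omega)).trans_le h₁)
  by_cases h₂ : a ≤ z (2 * d + 6)
  · exact Or.inr (Or.inl (block _ (2 * d + 8) (by omega) fun i hi =>
      h₂.trans_lt (ho _ _ (by omega) (by omega))))
  refine Or.inr (Or.inr (block _ (d + 4) (by omega) fun i hi =>
    ⟨fun hle => h₁ ?_, fun hle => h₂ ?_⟩))
  · exact (ho (d + 2) (d + 4 + i) (by omega) (by omega)).le.trans hle
  · exact hle.trans (ho (d + 4 + i) (2 * d + 6) (by omega) (by omega)).le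

lemma HasLongPathsIn.lt_or_gt_or_incGraph_adj {U : Set α} (hU : HasLongPathsIn (incGraph α) U)
    (a : α) :
    HasLongPathsIn (incGraph α) {u ∈ U | u < a} ∨
      HasLongPathsIn (incGraph α) {u ∈ U | a < u} ∨
      HasLongPathsIn (incGraph α) {u ∈ U | (incGraph α).Adj u a} := by
  have key := fun n => (hU (3 * n + 8)).lt_or_gt_or_incGraph_adj a
  rcases HasPathIn.antitone.forall_or_forall (HasPathIn.antitone.sup HasPathIn.antitone) key
    with h | h
  · exact Or.inl h
  · exact Or.inr (HasPathIn.antitone.forall_or_forall HasPathIn.antitone h)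

lemma HasLongPathsIn.exists_lt_or_gt_or_forall_incGraph_adj {U : Set α}
    (hU : HasLongPathsIn (incGraph α) U) (f : ℕ → α) (m : ℕ) :
    (∃ i < m, HasLongPathsIn (incGraph α) {u ∈ U | u < f i} ∨
        HasLongPathsIn (incGraph α) {u ∈ U | f i < u}) ∨
      HasLongPathsIn (incGraph α) {u ∈ U | ∀ i < m, (incGraph α).Adj u (f i)} := by
  induction m with
  | zero => exact Or.inr (hU.mono fun u hu => ⟨hu, fun i hi => absurd hi (Nat.not_lt_zero i)⟩)
  | succ m ih =>
    rcases ih with ⟨i, hi, h⟩ | hW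
    · exact Or.inl ⟨i, by omega, h⟩
    rcases hW.lt_or_gt_or_incGraph_adj (f m) with h | h | h
    · exact Or.inl ⟨m, by omega, Or.inl (h.mono fun u hu => ⟨hu.1.1, hu.2⟩)⟩
    · exact Or.inl ⟨m, by omega, Or.inr (h.mono fun u hu => ⟨hu.1.1, hu.2⟩)⟩
    · refine Or.inr (h.mono fun u hu => ⟨hu.1.1, fun i hi => ?_⟩)
      rcases (show i < m ∨ i = m by omega) with hi | rfl
      · exact hu.1.2 i hi
      · exact hu.2

lemma HasLongPathsIn.exists_path_complete_or_comparable {U : Set α}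
    (hU : HasLongPathsIn (incGraph α) U) (n : ℕ) :
    ∃ y U', IsInducedPathSeq (incGraph α) n y ∧ (∀ i ≤ n, y i ∈ U) ∧ U' ⊆ U ∧
      HasLongPathsIn (incGraph α) U' ∧
      ((∀ i ≤ n, ∀ u ∈ U', (incGraph α).Adj (y i) u) ∨
        ∀ i ≤ n, ∀ u ∈ U', y i < u ∨ u < y i) := by
  -- Thirds `[0, n]`, `[n + 2, 2n + 2]`, `[2n + 4, 3n + 4]`, two apart, hence comparable.
  obtain ⟨z, hz, hzU, ho⟩ := (hU (3 * n + 4)).exists_isOriented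
  have hmemU : ∀ s, s + n ≤ 3 * n + 4 → ∀ i ≤ n, z (s + i) ∈ U :=
    fun s hs i hi => hzU _ (by omega)
  rcases hU.exists_lt_or_gt_or_forall_incGraph_adj (fun i => z (n + 2 + i)) (n + 1) with
    ⟨i, hi, hbelow | habove⟩ | hadj
  · exact ⟨_, _, hz.shift (s := 2 * n + 4) (by omega), hmemU _ (by omega), fun u hu => hu.1,
      hbelow, Or.inr fun j hj u hu => Or.inr (hu.2.trans (ho _ _ (by omega) (by omega)))⟩
  · exact ⟨_, _, hz.shift (s := 0) (by omega), hmemU _ (by omega), fun u hu => hu.1,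
      habove, Or.inr fun j hj u hu => Or.inl ((ho _ _ (by omega) (by omega)).trans hu.2)⟩
  · exact ⟨_, _, hz.shift (s := n + 2) (by omega), hmemU _ (by omega), fun u hu => hu.1,
      hadj, Or.inl fun j hj u hu => (hu.2 j (by omega)).symm⟩

lemma HasLongPathsIn.exists_seq_complete_or_comparable {U : Set α}
    (hU : HasLongPathsIn (incGraph α) U) :
    ∃ (y : ℕ → ℕ → α) (T : Set ℕ), (∀ k, IsInducedPathSeq (incGraph α) k (y k)) ∧
      (∀ k ∈ T, ∀ l > k, ∀ i ≤ k, ∀ j ≤ l, (incGraph α).Adj (y k i) (y l j)) ∧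
      (∀ k ∉ T, ∀ l > k, ∀ i ≤ k, ∀ j ≤ l, y k i < y l j ∨ y l j < y k i) := by
  choose path next hpath hmem hsub hnext hrel using
    fun (W : {W : Set α // HasLongPathsIn (incGraph α) W}) (k : ℕ) =>
      W.2.exists_path_complete_or_comparable k
  let W : ℕ → {W : Set α // HasLongPathsIn (incGraph α) W} :=
    fun k => Nat.rec ⟨U, hU⟩ (fun k Wk => ⟨next Wk k, hnext Wk k⟩) k
  have hW : Antitone fun k => (W k).1 := antitone_nat_of_succ_le fun k => hsub (W k) k
  have hlater : ∀ k l, k < l → ∀ j ≤ l, path (W l) l j ∈ next (W k) k :=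
    fun k l hkl j hj => hW hkl (hmem (W l) l j hj)
  refine ⟨fun k => path (W k) k,
    {k | ∀ i ≤ k, ∀ u ∈ next (W k) k, (incGraph α).Adj (path (W k) k i) u},
    fun k => hpath _ _, fun k hk l hkl i hi j hj => hk i hi _ (hlater k l hkl j hj),
    fun k hk l hkl i hi j hj => ?_⟩
  exact (hrel (W k) k).resolve_left hk i hi _ (hlater k l hkl j hj)

end Poset

theorem incomparabilityGraph_embeds_direct_or_complete_sum_of_paths
    {α : Type*} [PartialOrder α]
    (h : ∀ n : ℕ, ∃ x : Fin (n + 1) → α, IsInducedPath (incGraph α) x) :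
    EmbedsDirectSumOfPaths (incGraph α) ∨ EmbedsCompleteSumOfPaths (incGraph α) := by
  obtain ⟨y, T, hy, hT, hTc⟩ :=
    (HasUnboundedPaths.hasLongPathsIn_univ h).exists_seq_complete_or_comparable
  rcases frequently_or_distrib.1 (Frequently.of_forall (f := atTop) fun k => em (k ∈ T))
    with hfreq | hfreq
  · obtain ⟨φ, hφ, hφT⟩ := extraction_of_frequently_atTop hfreq
    refine Or.inr (exists_sum_of_paths _ (incGraph α).symm φ (fun _ => hφ.le_apply)
      (fun n => y (φ n)) (fun n => hy _) fun m n hmn i hi j hj => ?_)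
    have hadj := hT _ (hφT m) _ (hφ hmn) i hi j hj
    exact ⟨hadj.ne, hadj⟩
  · obtain ⟨φ, hφ, hφT⟩ := extraction_of_frequently_atTop hfreq
    exact Or.inl (exists_sum_of_paths (fun a b => ¬ (incGraph α).Adj a b)
      ⟨fun _ _ hab hba => hab hba.symm⟩ φ (fun _ => hφ.le_apply) (fun n => y (φ n))
      (fun n => hy _) fun m n hmn i hi j hj =>
        ne_and_not_incGraph_adj_of_lt_or_gt (hTc _ (hφT m) _ (hφ hmn) i hi j hj))
end

section
/- Let A be a finite nonempty alphabet and u : ℕ → A a word. Then u is uniformly recurrent if and only if fac(u) is inexhaustible and fac(u) contains no infinite antichain with respect to the factor (infix) order. -/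
open SimpleGraph

/-!
If `u` is uniformly recurrent, every factor occurs in every long enough window of `u`: two factors
can therefore be joined inside `u`, and a long member of a sequence of factors contains its first
member. Conversely, by finiteness of the alphabet, a word that is not uniformly recurrent has a
factor `v` that is absent from arbitrarily long windows. Joining `v`, such a window and `v` again
by inexhaustibility produces consecutive occurrences of `v` arbitrarily far apart. A complete
return word to `v` (from one occurrence to the next) contains `v` only at its two ends, so it is an
infix of another one only when their gaps coincide: return words with distinct gaps form an
infinite antichain.
-/

section

variable {A : Type*} {u : ℕ → A}

def factorAt (u : ℕ → A) (p n : ℕ) : List A := (List.range n).map fun i => u (p + i)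

@[simp]
lemma factorAt_length (p n : ℕ) : (factorAt u p n).length = n := by
  simp [factorAt]

lemma isFactor_iff_exists_factorAt {w : List A} :
    IsFactor u w ↔ ∃ p, factorAt u p w.length = w :=
  exists_congr fun _ => eq_comm

lemma isFactor_factorAt (p n : ℕ) : IsFactor u (factorAt u p n) :=
  isFactor_iff_exists_factorAt.2 ⟨p, by rw [factorAt_length]⟩

lemma factorAt_add (p m n : ℕ) :
    factorAt u p (m + n) = factorAt u p m ++ factorAt u (p + m) n := by
  simp only [factorAt, List.range_add, List.map_append, List.map_map]
  congr 1
  exact List.map_congr_left fun i _ => by simp only [Function.comp, Nat.add_assoc]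

lemma factorAt_eq_factorAt_iff {p q n : ℕ} :
    factorAt u p n = factorAt u q n ↔ ∀ i < n, u (p + i) = u (q + i) := by
  simp only [factorAt, List.map_inj_left, List.mem_range]

lemma factorAt_add_eq_factorAt_add {p q L d k : ℕ} (h : factorAt u p L = factorAt u q L)
    (hk : d + k ≤ L) : factorAt u (p + d) k = factorAt u (q + d) k := by
  rw [factorAt_eq_factorAt_iff] at h ⊢
  intro i hi
  simpa only [Nat.add_assoc] using h (d + i) (by omega)

lemma factorAt_eq_of_eq_append_append {l₁ l₂ l₃ : List A} {p L : ℕ}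
    (h : factorAt u p L = l₁ ++ l₂ ++ l₃) :
    factorAt u (p + l₁.length) l₂.length = l₂ := by
  have hL : L = l₁.length + l₂.length + l₃.length := by
    simpa only [factorAt_length, List.length_append] using congrArg List.length h
  rw [hL, factorAt_add, factorAt_add] at h
  exact (List.append_inj (List.append_inj h (by simp)).1 (by simp)).2

lemma factorAt_infix_factorAt {p q m n : ℕ} (hpq : p ≤ q) (hle : q + n ≤ p + m) :
    factorAt u q n <:+: factorAt u p m := by
  obtain ⟨k, rfl⟩ := Nat.exists_eq_add_of_le hpq
  obtain ⟨r, rfl⟩ := Nat.exists_eq_add_of_le (show k + n ≤ m by omega)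
  exact ⟨factorAt u p k, factorAt u (p + k + n) r,
    by rw [factorAt_add, factorAt_add, Nat.add_assoc]⟩

lemma exists_factorAt_eq_of_infix {v : List A} {p m : ℕ} (h : v <:+: factorAt u p m) :
    ∃ q, p ≤ q ∧ q + v.length ≤ p + m ∧ factorAt u q v.length = v := by
  obtain ⟨s, t, hst⟩ := h
  refine ⟨p + s.length, by omega, ?_, factorAt_eq_of_eq_append_append hst.symm⟩
  have := congrArg List.length hst
  simp only [List.length_append, factorAt_length] at this
  omega

def OccursWithBoundedGaps (u : ℕ → A) (v : List A) : Prop :=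
  ∀ᶠ m in Filter.atTop, ∀ p, v <:+: factorAt u p m

lemma UniformlyRecurrent.exists_forall_infix_factorAt (h : UniformlyRecurrent u) {v : List A}
    (hv : IsFactor u v) : ∃ m, ∀ p, v <:+: factorAt u p m := by
  obtain ⟨m, hm⟩ := h v.length
  exact ⟨m, fun p => hm v _ hv (isFactor_factorAt p m) rfl (factorAt_length p m)⟩

lemma UniformlyRecurrent.inexhaustible (h : UniformlyRecurrent u) : Inexhaustible u := by
  intro v v' hv hv'
  obtain ⟨m, hm⟩ := h.exists_forall_infix_factorAt hv
  obtain ⟨m', hm'⟩ := h.exists_forall_infix_factorAt hv'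
  obtain ⟨p, -, -, hp⟩ := exists_factorAt_eq_of_infix (hm 0)
  obtain ⟨q, hq, -, hq'⟩ := exists_factorAt_eq_of_infix (hm' (p + v.length))
  obtain ⟨k, rfl⟩ := Nat.exists_eq_add_of_le hq
  refine ⟨factorAt u (p + v.length) k, isFactor_iff_exists_factorAt.2 ⟨p, ?_⟩⟩
  simp only [List.length_append, factorAt_length]
  rw [factorAt_add, factorAt_add, hp, ← Nat.add_assoc, hq']

lemma UniformlyRecurrent.exists_ne_infix [Finite A] (h : UniformlyRecurrent u) (f : ℕ → List A)
    (hf : ∀ i, IsFactor u (f i)) : ∃ i j, i ≠ j ∧ f i <:+: f j := by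
  by_contra! hanti
  have hinj : Function.Injective f := fun i j hij => by
    by_contra hne
    exact hanti i j hne (hij ▸ List.infix_refl _)
  obtain ⟨m, hm⟩ := h.exists_forall_infix_factorAt (hf 0)
  have hshort : (insert 0 (f ⁻¹' {l | l.length < m})).Finite :=
    ((List.finite_length_lt A m).preimage hinj.injOn).insert 0
  obtain ⟨j, hj⟩ := hshort.exists_notMem
  simp only [Set.mem_insert_iff, Set.mem_preimage, Set.mem_ofPred_eq, not_or, not_lt] at hj
  obtain ⟨p, hp⟩ := isFactor_iff_exists_factorAt.1 (hf j)
  refine hanti 0 j (Ne.symm hj.1) ((hm p).trans ?_)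
  rw [← hp]
  exact factorAt_infix_factorAt le_rfl (by omega)

lemma uniformlyRecurrent_of_forall_occursWithBoundedGaps [Finite A]
    (h : ∀ v, IsFactor u v → OccursWithBoundedGaps u v) : UniformlyRecurrent u := by
  intro n
  have hfin : ({v | v.length = n} ∩ {v | IsFactor u v}).Finite :=
    (List.finite_length_eq A n).inter_of_left _
  obtain ⟨m, hm⟩ := ((Filter.eventually_all_finite hfin).2 fun v hv => h v hv.2).exists
  refine ⟨m, fun v w hv hw hvn hwm => ?_⟩
  obtain ⟨p, hp⟩ := isFactor_iff_exists_factorAt.1 hw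
  rw [← hp, hwm]
  exact hm v ⟨hvn, hv⟩ p

lemma exists_consecutive_of_le_of_lt {P : ℕ → Prop} {a s c : ℕ} (has : a ≤ s) (ha : P a)
    (hsc : s < c) (hc : P c) :
    ∃ p t, p ≤ s ∧ s < t ∧ P p ∧ P t ∧ ∀ i, p < i → i < t → ¬ P i := by
  classical
  have hnext : ∃ t, s < t ∧ P t := ⟨c, hsc, hc⟩
  obtain ⟨hst, hPt⟩ := Nat.find_spec hnext
  refine ⟨Nat.findGreatest P s, Nat.find hnext, Nat.findGreatest_le s, hst,
    Nat.findGreatest_spec has ha, hPt, fun i hpi hit hPi => ?_⟩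
  rcases le_or_gt i s with his | hsi
  · exact Nat.findGreatest_is_greatest hpi his hPi
  · exact Nat.find_min hnext hit ⟨hsi, hPi⟩

/-- Consecutive occurrences of `v` at `p < t`: `factorAt u p (t - p + v.length)` is a complete
return word to `v`. -/
def ConsecutiveOccurrences (u : ℕ → A) (v : List A) (p t : ℕ) : Prop :=
  p < t ∧ factorAt u p v.length = v ∧ factorAt u t v.length = v ∧
    ∀ i, p < i → i < t → factorAt u i v.length ≠ v

lemma ConsecutiveOccurrences.eq_or_eq {v : List A} {p t s : ℕ}
    (h : ConsecutiveOccurrences u v p t) (hps : p ≤ s) (hst : s ≤ t)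
    (hs : factorAt u s v.length = v) : s = p ∨ s = t := by
  by_contra! hne
  exact h.2.2.2 s (lt_of_le_of_ne hps hne.1.symm) (lt_of_le_of_ne hst hne.2) hs

lemma ConsecutiveOccurrences.sub_eq_of_infix {v : List A} {p t p' t' : ℕ}
    (h : ConsecutiveOccurrences u v p t) (h' : ConsecutiveOccurrences u v p' t')
    (hinf : factorAt u p (t - p + v.length) <:+: factorAt u p' (t' - p' + v.length)) :
    t - p = t' - p' := by
  obtain ⟨q, hq, hqle, hqeq⟩ := exists_factorAt_eq_of_infix hinf
  rw [factorAt_length] at hqle hqeq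
  have hpt := h.1
  have hpt' := h'.1
  have hfirst : factorAt u q v.length = v := by
    simpa only [Nat.add_zero, h.2.1] using
      factorAt_add_eq_factorAt_add (d := 0) (k := v.length) hqeq (by omega)
  have hsecond : factorAt u (q + (t - p)) v.length = v := by
    rw [factorAt_add_eq_factorAt_add hqeq le_rfl, Nat.add_sub_cancel' h.1.le, h.2.2.1]
  have hq_eq := h'.eq_or_eq hq (by omega) hfirst
  have hq_add_eq := h'.eq_or_eq (by omega) (by omega) hsecond
  omega

lemma Inexhaustible.exists_consecutiveOccurrences (hinex : Inexhaustible u) {v : List A}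
    (hv : IsFactor u v) (hgap : ¬ OccursWithBoundedGaps u v) (L : ℕ) :
    ∃ p t, L < t - p ∧ ConsecutiveOccurrences u v p t := by
  obtain ⟨m, hm, hnot⟩ :=
    Filter.frequently_atTop.1 (Filter.not_eventually.1 hgap) (v.length + L + 1)
  obtain ⟨q, hq⟩ := not_forall.1 hnot
  obtain ⟨w', hw'⟩ := hinex _ v (isFactor_factorAt q m) hv
  obtain ⟨w, hw⟩ := hinex v _ hv hw'
  obtain ⟨a, ha⟩ := isFactor_iff_exists_factorAt.1 hw
  have hstart : factorAt u a v.length = v := by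
    simpa using factorAt_eq_of_eq_append_append (l₁ := []) (l₂ := v)
      (l₃ := w ++ (factorAt u q m ++ w' ++ v))
      (ha.trans (by simp only [List.append_assoc, List.nil_append]))
  have hx : factorAt u (a + v.length + w.length) m = factorAt u q m := by
    simpa [Nat.add_assoc] using factorAt_eq_of_eq_append_append (l₁ := v ++ w)
      (l₂ := factorAt u q m) (l₃ := w' ++ v) (ha.trans (by simp only [List.append_assoc]))
  have hend : factorAt u (a + v.length + w.length + m + w'.length) v.length = v := by
    simpa [Nat.add_assoc] using factorAt_eq_of_eq_append_append
      (l₁ := v ++ w ++ factorAt u q m ++ w') (l₂ := v) (l₃ := [])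
      (ha.trans (by simp only [List.append_assoc, List.append_nil]))
  -- consecutive occurrences straddling the copy of the window avoiding `v` are far apart
  obtain ⟨p, t, hps, hst, hp, ht, hbetween⟩ :=
    exists_consecutive_of_le_of_lt (P := fun i => factorAt u i v.length = v)
      (s := a + v.length + w.length) (by omega) hstart (by omega) hend
  refine ⟨p, t, ?_, hst.trans_le' hps, hp, ht, hbetween⟩
  by_contra! hclose
  apply hq
  rw [← ht, ← hx]
  exact factorAt_infix_factorAt hst.le (by omega)

lemma Inexhaustible.exists_antichain (hinex : Inexhaustible u) {v : List A}
    (hv : IsFactor u v) (hgap : ¬ OccursWithBoundedGaps u v) :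
    ∃ f : ℕ → List A, (∀ i, IsFactor u (f i)) ∧ ∀ i j, i ≠ j → ¬ f i <:+: f j := by
  have hgaps : {g | ∃ p t, t - p = g ∧ ConsecutiveOccurrences u v p t}.Infinite :=
    Set.infinite_of_forall_exists_gt fun L => by
      obtain ⟨p, t, hL, hpt⟩ := hinex.exists_consecutiveOccurrences hv hgap L
      exact ⟨t - p, ⟨p, t, rfl, hpt⟩, hL⟩
  let e := hgaps.natEmbedding
  choose p t hgap hpt using fun i => (e i).2
  refine ⟨fun i => factorAt u (p i) (t i - p i + v.length), fun i => isFactor_factorAt _ _,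
    fun i j hij hinf => hij (e.injective (Subtype.ext ?_))⟩
  rw [← hgap, ← hgap]
  exact (hpt i).sub_eq_of_infix (hpt j) hinf

end

theorem uniformlyRecurrent_iff_inexhaustible_and_no_infinite_antichain_general
    {A : Type*} [Fintype A] (u : ℕ → A) :
    UniformlyRecurrent u ↔
      (Inexhaustible u ∧
        ¬ ∃ f : ℕ → List A, (∀ i, IsFactor u (f i)) ∧
            ∀ i j, i ≠ j → ¬ f i <:+: f j) := by
  constructor
  · intro h
    refine ⟨h.inexhaustible, fun ⟨f, hf, hanti⟩ => ?_⟩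
    obtain ⟨i, j, hij, hinf⟩ := h.exists_ne_infix f hf
    exact hanti i j hij hinf
  · rintro ⟨hinex, hno_antichain⟩
    refine uniformlyRecurrent_of_forall_occursWithBoundedGaps fun v hv => ?_
    by_contra hgap
    exact hno_antichain (hinex.exists_antichain hv hgap)

theorem uniformlyRecurrent_iff_inexhaustible_and_no_infinite_antichain
    {A : Type*} [Fintype A] [Nonempty A] (u : ℕ → A) :
    UniformlyRecurrent u ↔
      (Inexhaustible u ∧
        ¬ ∃ f : ℕ → List A, (∀ i, IsFactor u (f i)) ∧
            ∀ i j, i ≠ j → ¬ f i <:+: f j) :=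
  uniformlyRecurrent_iff_inexhaustible_and_no_infinite_antichain_general u
end

section
/- Let G be a simple graph such that for every n ∈ ℕ the graph G contains a clique with n vertices. Then either G contains an infinite clique, or there is a family (A_n)_{n ∈ ℕ} of pairwise disjoint finite subsets of the vertex set of G, with no edge of G between distinct A_n, such that each A_n is a clique of G with at least n vertices. -/
open SimpleGraph

/-!
Call a finite set `S` of vertices good if its common neighbourhood contains arbitrarily large
cliques; `∅` is good by hypothesis. If every good `S` extends to a good `S ∪ {v}` with `v` in
the common neighbourhood of `S`, iterating produces an infinite clique. Otherwise some good `S`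
is stuck: its common neighbourhood `W` has arbitrarily large cliques, while every `v ∈ W` has
bounded cliques in `N(v) ∩ W`. Removing a finite `F ⊆ W` together with its neighbours then
costs only boundedly many vertices of any clique in `W`, so cliques of growing size can be
chosen one after another, each avoiding the earlier ones and their neighbourhoods.
-/

theorem exists_seq_of_forall_finset_exists_insert {α : Type*} [DecidableEq α]
    (P : Finset α → Prop) (r : α → α → Prop) (h₀ : P ∅)
    (h : ∀ s, P s → ∃ y, (∀ x ∈ s, r x y) ∧ P (insert y s)) :
    ∃ f : ℕ → α, ∀ m n, m < n → r (f m) (f n) := by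
  have : Nonempty α := let ⟨y, _⟩ := h ∅ h₀; ⟨y⟩
  choose! next hnext using h
  let chain : ℕ → Finset α := fun n => Nat.rec ∅ (fun _ s => insert (next s) s) n
  have hP : ∀ n, P (chain n) := fun n => Nat.rec h₀ (fun _ ih => (hnext _ ih).2) n
  have hmono : Monotone chain := monotone_nat_of_le_succ fun _ => Finset.subset_insert _ _
  exact ⟨fun n => next (chain n), fun m n hmn =>
    (hnext _ (hP n)).1 _ (hmono hmn (Finset.mem_insert_self _ _))⟩

namespace SimpleGraph

variable {V : Type*} (G : SimpleGraph V)

def HasArbitrarilyLargeCliquesIn (W : Set V) : Prop :=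
  ∀ n, ∃ t : Finset V, G.IsClique (t : Set V) ∧ (t : Set V) ⊆ W ∧ n ≤ t.card

variable {G}

theorem infinite_isClique_range_of_adj {f : ℕ → V} (hf : ∀ m n, m < n → G.Adj (f m) (f n)) :
    (Set.range f).Infinite ∧ G.IsClique (Set.range f) := by
  have hpair : Pairwise fun m n => G.Adj (f m) (f n) := fun m n hmn =>
    hmn.lt_or_gt.elim (hf m n) fun h => (hf n m h).symm
  refine ⟨Set.infinite_range_of_injective fun m n hmn => ?_, ?_⟩
  · by_contra hne
    exact (hpair hne).ne hmn
  · rintro _ ⟨m, rfl⟩ _ ⟨n, rfl⟩ hne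
    exact hpair fun h => hne (congrArg f h)

theorem HasArbitrarilyLargeCliquesIn.mono {W W' : Set V} (h : G.HasArbitrarilyLargeCliquesIn W)
    (hWW' : W ⊆ W') : G.HasArbitrarilyLargeCliquesIn W' := fun n =>
  let ⟨t, ht, htW, hn⟩ := h n
  ⟨t, ht, htW.trans hWW', hn⟩

theorem not_hasArbitrarilyLargeCliquesIn_singleton (v : V) :
    ¬ G.HasArbitrarilyLargeCliquesIn {v} := fun h => by
  obtain ⟨t, -, htv, hcard⟩ := h 2
  have : t.card ≤ 1 := Finset.card_le_one.2 fun a ha b hb => (htv ha).trans (htv hb).symm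
  omega

theorem HasArbitrarilyLargeCliquesIn.of_union {W W' : Set V}
    (h : G.HasArbitrarilyLargeCliquesIn (W ∪ W')) :
    G.HasArbitrarilyLargeCliquesIn W ∨ G.HasArbitrarilyLargeCliquesIn W' := by
  classical
  refine or_iff_not_imp_left.2 fun hW n => ?_
  obtain ⟨N, hN⟩ :
      ∃ N, ∀ t : Finset V, G.IsClique (t : Set V) → (t : Set V) ⊆ W → t.card < N := by
    simpa [HasArbitrarilyLargeCliquesIn] using hW
  obtain ⟨t, ht, htW, hcard⟩ := h (n + N)
  have hfilter (p : V → Prop) [DecidablePred p] : G.IsClique ((t.filter p : Finset V) : Set V) :=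
    ht.subset (Finset.coe_subset.2 (Finset.filter_subset _ _))
  have hin : (t.filter (· ∈ W)).card < N :=
    hN _ (hfilter _) fun x hx => (Finset.mem_filter.1 hx).2
  refine ⟨t.filter (· ∉ W), hfilter _, fun x hx => ?_, ?_⟩
  · obtain ⟨hxt, hxW⟩ := Finset.mem_filter.1 hx
    exact (htW hxt).resolve_left hxW
  · have := Finset.card_filter_add_card_filter_not (s := t) (p := (· ∈ W))
    omega

theorem HasArbitrarilyLargeCliquesIn.diff_insert_neighborSet {W : Set V} {v : V}
    (h : G.HasArbitrarilyLargeCliquesIn W)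
    (hv : ¬ G.HasArbitrarilyLargeCliquesIn (G.neighborSet v ∩ W)) :
    G.HasArbitrarilyLargeCliquesIn (W \ insert v (G.neighborSet v)) := by
  have hcover : W ⊆ ({v} ∪ G.neighborSet v ∩ W) ∪ W \ insert v (G.neighborSet v) := by
    intro x hx
    by_cases hxv : x ∈ insert v (G.neighborSet v)
    · rcases hxv with rfl | hxv
      · exact Or.inl (Or.inl rfl)
      · exact Or.inl (Or.inr ⟨hxv, hx⟩)
    · exact Or.inr ⟨hx, hxv⟩
  exact (h.mono hcover).of_union.resolve_left fun h' =>
    h'.of_union.elim (not_hasArbitrarilyLargeCliquesIn_singleton v) hv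

theorem HasArbitrarilyLargeCliquesIn.diff_biUnion_insert_neighborSet {W : Set V}
    (h : G.HasArbitrarilyLargeCliquesIn W) (F : Finset V)
    (hF : ∀ v ∈ F, ¬ G.HasArbitrarilyLargeCliquesIn (G.neighborSet v ∩ W)) :
    G.HasArbitrarilyLargeCliquesIn (W \ ⋃ v ∈ F, insert v (G.neighborSet v)) := by
  classical
  induction F using Finset.induction_on with
  | empty => simpa using h
  | insert a F _ ih =>
    rw [Finset.set_biUnion_insert, Set.union_comm, ← Set.sdiff_sdiff]
    refine (ih fun v hv => hF v (Finset.mem_insert_of_mem hv)).diff_insert_neighborSet fun h' => ?_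
    exact hF a (Finset.mem_insert_self a F)
      (h'.mono (Set.inter_subset_inter_right _ Set.sdiff_subset))

theorem HasArbitrarilyLargeCliquesIn.exists_isClique_avoiding {W : Set V}
    (h : G.HasArbitrarilyLargeCliquesIn W)
    (hW : ∀ v ∈ W, ¬ G.HasArbitrarilyLargeCliquesIn (G.neighborSet v ∩ W))
    {F : Finset V} (hF : (F : Set V) ⊆ W) (n : ℕ) :
    ∃ t : Finset V, G.IsClique (t : Set V) ∧ (t : Set V) ⊆ W ∧ n ≤ t.card ∧
      ∀ x ∈ F, ∀ y ∈ t, x ≠ y ∧ ¬ G.Adj x y := by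
  obtain ⟨t, ht, htW, hcard⟩ :=
    h.diff_biUnion_insert_neighborSet F (fun v hv => hW v (hF hv)) n
  refine ⟨t, ht, fun y hy => (htW hy).1, hcard, fun x hx y hy => ?_⟩
  have hy := (htW hy).2
  simp only [Set.mem_iUnion, Set.mem_insert_iff, mem_neighborSet, not_exists] at hy
  exact ⟨fun hxy => hy x hx (Or.inl hxy.symm), fun hxy => hy x hx (Or.inr hxy)⟩

theorem exists_disjoint_nonadj_cliques {W : Set V} (h : G.HasArbitrarilyLargeCliquesIn W)
    (hW : ∀ v ∈ W, ¬ G.HasArbitrarilyLargeCliquesIn (G.neighborSet v ∩ W)) :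
    ∃ A : ℕ → Finset V, (∀ m n, m ≠ n → Disjoint (A m) (A n)) ∧
      (∀ m n, m ≠ n → ∀ x ∈ A m, ∀ y ∈ A n, ¬ G.Adj x y) ∧
      ∀ n, n ≤ (A n).card ∧ G.IsClique ↑(A n) := by
  classical
  obtain ⟨A, hA, hAr⟩ := exists_seq_of_forall_finset_exists
    (fun t : Finset V => G.IsClique (t : Set V) ∧ (t : Set V) ⊆ W)
    (fun s t => s.card < t.card ∧ Disjoint s t ∧ ∀ x ∈ s, ∀ y ∈ t, ¬ G.Adj x y)
    fun S hS => by
      have hF : (S.biUnion id : Set V) ⊆ W := fun v hv => by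
        obtain ⟨s, hs, hvs⟩ := Finset.mem_biUnion.1 hv
        exact (hS s hs).2 hvs
      obtain ⟨t, ht, htW, hcard, havoid⟩ :=
        h.exists_isClique_avoiding hW hF (S.sup Finset.card + 1)
      refine ⟨t, ⟨ht, htW⟩, fun s hs => ⟨?_, ?_, ?_⟩⟩
      · exact Nat.lt_of_le_of_lt (Finset.le_sup (f := Finset.card) hs) hcard
      · exact Finset.disjoint_left.2 fun x hxs hxt =>
          (havoid x (Finset.mem_biUnion.2 ⟨s, hs, hxs⟩) x hxt).1 rfl
      · exact fun x hx y hy => (havoid x (Finset.mem_biUnion.2 ⟨s, hs, hx⟩) y hy).2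
  have hcard : StrictMono fun n => (A n).card := fun m n hmn => (hAr m n hmn).1
  refine ⟨A, fun m n hmn => ?_, fun m n hmn x hx y hy => ?_,
    fun n => ⟨hcard.id_le n, (hA n).1⟩⟩
  · rcases hmn.lt_or_gt with hlt | hlt
    exacts [(hAr m n hlt).2.1, (hAr n m hlt).2.1.symm]
  · rcases hmn.lt_or_gt with hlt | hlt
    exacts [(hAr m n hlt).2.2 x hx y hy, fun hxy => (hAr n m hlt).2.2 y hy x hx hxy.symm]

end SimpleGraph

theorem infinite_clique_or_direct_sum_of_cliques {V : Type*} (G : SimpleGraph V)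
    (h : ∀ n : ℕ, ∃ s : Finset V, s.card = n ∧ G.IsClique ↑s) :
    (∃ S : Set V, S.Infinite ∧ G.IsClique S) ∨
      ∃ A : ℕ → Finset V, (∀ m n, m ≠ n → Disjoint (A m) (A n)) ∧
        (∀ m n, m ≠ n → ∀ x ∈ A m, ∀ y ∈ A n, ¬ G.Adj x y) ∧
        ∀ n, n ≤ (A n).card ∧ G.IsClique ↑(A n) := by
  classical
  set P : Finset V → Prop := fun s => G.HasArbitrarilyLargeCliquesIn {x | ∀ u ∈ s, G.Adj u x}
  have hP₀ : P ∅ := fun n =>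
    let ⟨s, hs, hcl⟩ := h n
    ⟨s, hcl, by simp, hs.ge⟩
  by_cases hext : ∀ s, P s → ∃ v, (∀ u ∈ s, G.Adj u v) ∧ P (insert v s)
  · obtain ⟨f, hf⟩ := exists_seq_of_forall_finset_exists_insert P G.Adj hP₀ hext
    exact Or.inl ⟨_, infinite_isClique_range_of_adj hf⟩
  · push Not at hext
    obtain ⟨S, hS, hstuck⟩ := hext
    refine Or.inr (exists_disjoint_nonadj_cliques hS fun v hv => ?_)
    have hinsert : {x | ∀ u ∈ insert v S, G.Adj u x} =
        G.neighborSet v ∩ {x | ∀ u ∈ S, G.Adj u x} := by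
      ext x
      simp
    exact hinsert ▸ hstuck v hv
end

section
/- Let G be a path-minimal simple graph such that every finite induced subgraph of G is isomorphic to an induced subgraph of some finite path (equivalently, is a disjoint union of finite paths). Then G is a direct sum of finite paths of unbounded length: every connected component of G is a finite path, and the lengths of the components are unbounded. -/
open SimpleGraph

/-!
A graph whose finite induced subgraphs are unions of paths is locally finite, so, avoiding a
finite set of vertices together with its neighbours, one finds induced paths of every length that
are pairwise disjoint and non-adjacent. Their union `A` still has unbounded paths, while every
component of `G ↾ A` lies inside one of them. Path-minimality embeds `G` into `G ↾ A`, so every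
component of `G` is finite; a finite connected graph embedding into a path is itself a path, since
its image is an interval. Finally, an induced path of length `n` lies in a single component, which
therefore has length at least `n`.
-/

theorem Finset.exists_add_notMem_of_card_le {B : Finset ℕ} {k : ℕ} (hB : B.card ≤ k) (n : ℕ) :
    ∃ a, a + n < (k + 1) * (n + 1) ∧ ∀ i ≤ n, a + i ∉ B := by
  -- Some `j ≤ k` is no quotient `b / (n + 1)` of any `b ∈ B`, so the block from `j * (n + 1)`
  -- misses `B`.
  have hcard : (B.image (· / (n + 1))).card < (Finset.range (k + 1)).card := by
    rw [Finset.card_range]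
    exact Nat.lt_succ_of_le (Finset.card_image_le.trans hB)
  obtain ⟨j, hj, hjB⟩ := Finset.exists_mem_notMem_of_card_lt_card hcard
  rw [Finset.mem_range] at hj
  refine ⟨j * (n + 1), by nlinarith, fun i hi hiB => hjB (Finset.mem_image.mpr ⟨_, hiB, ?_⟩)⟩
  rw [add_comm, Nat.add_mul_div_right _ _ (Nat.succ_pos n), Nat.div_eq_of_lt (by omega), zero_add]

section InducedPath

variable {V : Type*} {G : SimpleGraph V}

theorem IsInducedPath.segment {N : ℕ} {x : Fin (N + 1) → V} (hx : IsInducedPath G x)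
    {a n : ℕ} (h : a + n ≤ N) :
    IsInducedPath G (fun i : Fin (n + 1) => x ⟨a + i, by omega⟩) := by
  refine ⟨fun i j hij => Fin.ext ?_, fun i j => ?_⟩
  · simpa using congrArg Fin.val (hx.1 hij)
  · rw [hx.2, Nat.dist_add_add_left]

theorem IsInducedPath.induce {n : ℕ} {x : Fin (n + 1) → V} (hx : IsInducedPath G x) {A : Set V}
    (hA : ∀ i, x i ∈ A) : IsInducedPath (G.induce A) (fun i => ⟨x i, hA i⟩) :=
  ⟨fun _ _ hij => hx.1 (congrArg Subtype.val hij), fun i j => hx.2 i j⟩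

theorem IsInducedPath.mem_supp {n : ℕ} {x : Fin (n + 1) → V} (hx : IsInducedPath G x)
    (i : Fin (n + 1)) : x i ∈ (G.connectedComponentMk (x 0)).supp := by
  let f : pathGraph (n + 1) →g G :=
    ⟨x, fun {i j} h => (hx.2 i j).mpr (by rw [pathGraph_adj] at h; simp only [Nat.dist]; omega)⟩
  exact ConnectedComponent.sound (((pathGraph_connected n).preconnected i 0).map f)

theorem IsPathOn.le_of_injective {A : Set V} {m n : ℕ} (hA : IsPathOn G A m)
    {y : Fin (n + 1) → V} (hy : Function.Injective y) (hyA : ∀ i, y i ∈ A) : n ≤ m := by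
  obtain ⟨x, -, rfl, -⟩ := hA
  choose τ hτ using hyA
  have hτinj : Function.Injective τ := fun i j h => hy (by rw [← hτ i, ← hτ j, h])
  simpa using Fintype.card_le_of_injective τ hτinj

theorem HasUnboundedPaths.exists_forall_notMem (hup : HasUnboundedPaths G) {S : Set V}
    (hS : S.Finite) (n : ℕ) : ∃ x : Fin (n + 1) → V, IsInducedPath G x ∧ ∀ i, x i ∉ S := by
  classical
  obtain ⟨y, hy⟩ := hup ((hS.toFinset.card + 1) * (n + 1))
  let B : Finset ℕ := (Finset.univ.filter (y · ∈ S)).map Fin.valEmbedding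
  have hB : B.card ≤ hS.toFinset.card := by
    rw [Finset.card_map]
    exact Finset.card_le_card_of_injOn y (fun i hi => by simpa using hi) hy.1.injOn
  obtain ⟨a, ha, haB⟩ := Finset.exists_add_notMem_of_card_le hB n
  refine ⟨_, hy.segment ha.le, fun i hi => haB i (Nat.lt_succ_iff.mp i.isLt) ?_⟩
  exact Finset.mem_map.mpr ⟨⟨a + i, by omega⟩, by simpa using hi, rfl⟩

end InducedPath

section Components

variable {V : Type*} {G : SimpleGraph V}

theorem SimpleGraph.Reachable.eq_of_forall_adj_eq {ι : Type*} {b : V → ι}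
    (hb : ∀ u v, G.Adj u v → b u = b v) {u v : V} (h : G.Reachable u v) : b u = b v := by
  obtain ⟨p⟩ := h
  induction p with
  | nil => rfl
  | cons hadj _ ih => exact (hb _ _ hadj).trans ih

theorem SimpleGraph.ConnectedComponent.supp_finite_of_forall_adj_eq {ι : Type*} {b : V → ι}
    (hb : ∀ u v, G.Adj u v → b u = b v) (hfin : ∀ i, (b ⁻¹' {i}).Finite)
    (c : G.ConnectedComponent) : c.supp.Finite := by
  induction c using ConnectedComponent.ind with | h v =>
  refine (hfin (b v)).subset fun w hw => ?_
  exact (ConnectedComponent.exact hw).eq_of_forall_adj_eq hb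

theorem SimpleGraph.ConnectedComponent.supp_finite_of_embedding {W : Type*} {H : SimpleGraph W}
    (f : G ↪g H) (hH : ∀ c : H.ConnectedComponent, c.supp.Finite) (c : G.ConnectedComponent) :
    c.supp.Finite := by
  induction c using ConnectedComponent.ind with | h v =>
  refine ((hH (H.connectedComponentMk (f v))).preimage f.injective.injOn).subset fun w hw => ?_
  exact ConnectedComponent.sound ((ConnectedComponent.exact hw).map f.toHom)

theorem HasUnboundedPaths.exists_seq_separated (hup : HasUnboundedPaths G)
    (hloc : ∀ v, (G.neighborSet v).Finite) :
    ∃ f : ℕ → Σ n, Fin (n + 1) → V, (∀ k, k ≤ (f k).1 ∧ IsInducedPath G (f k).2) ∧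
      ∀ k l, k ≠ l → ∀ i j, (f k).2 i ≠ (f l).2 j ∧ ¬ G.Adj ((f k).2 i) ((f l).2 j) := by
  let Separated (p q : Σ n, Fin (n + 1) → V) : Prop :=
    ∀ i j, p.2 i ≠ q.2 j ∧ ¬ G.Adj (p.2 i) (q.2 j)
  have hstep : ∀ s : Finset (Σ n, Fin (n + 1) → V), (∀ p ∈ s, IsInducedPath G p.2) →
      ∃ q, IsInducedPath G q.2 ∧ ∀ p ∈ s, p.1 < q.1 ∧ Separated p q := by
    intro s _
    let S : Set V := ⋃ p ∈ s, Set.range p.2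
    have hS : S.Finite := s.finite_toSet.biUnion fun p _ => Set.finite_range p.2
    obtain ⟨x, hx, hxS⟩ := hup.exists_forall_notMem (hS.union (hS.biUnion fun v _ => hloc v))
      (s.sup Sigma.fst + 1)
    refine ⟨⟨_, x⟩, hx, fun p hp => ⟨Nat.lt_succ_of_le (Finset.le_sup hp), fun i j => ?_⟩⟩
    have hpS : p.2 i ∈ S := Set.mem_biUnion hp ⟨i, rfl⟩
    exact ⟨fun h => hxS j (Or.inl (by rwa [← show p.2 i = x j from h])),
      fun h => hxS j (Or.inr (Set.mem_biUnion hpS h))⟩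
  obtain ⟨f, hpath, hf⟩ := exists_seq_of_forall_finset_exists _ _ hstep
  have hmono : StrictMono fun k => (f k).1 := fun k l hkl => (hf k l hkl).1
  refine ⟨f, fun k => ⟨hmono.id_le k, hpath k⟩, fun k l hkl i j => ?_⟩
  rcases hkl.lt_or_gt with hlt | hlt
  · exact (hf k l hlt).2 i j
  · exact ((hf l k hlt).2 j i).imp Ne.symm fun h h' => h h'.symm

theorem HasUnboundedPaths.exists_induce_forall_supp_finite (hup : HasUnboundedPaths G)
    (hloc : ∀ v, (G.neighborSet v).Finite) :
    ∃ A : Set V, HasUnboundedPaths (G.induce A) ∧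
      ∀ c : (G.induce A).ConnectedComponent, c.supp.Finite := by
  obtain ⟨f, hpath, hsep⟩ := hup.exists_seq_separated hloc
  let A : Set V := ⋃ k, Set.range (f k).2
  have hmem : ∀ k i, (f k).2 i ∈ A := fun k i => Set.mem_iUnion.mpr ⟨k, i, rfl⟩
  choose b hb using fun a : A => Set.mem_iUnion.mp a.2
  refine ⟨A, fun n => ⟨_, ((hpath n).2.segment (a := 0) (by simpa using (hpath n).1)).induce
    fun i => hmem n _⟩, ConnectedComponent.supp_finite_of_forall_adj_eq (b := b) ?_ fun k => ?_⟩
  · intro u v huv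
    by_contra hne
    obtain ⟨i, hi⟩ := hb u
    obtain ⟨j, hj⟩ := hb v
    exact (hsep _ _ hne i j).2 (by rw [hi, hj]; exact huv)
  · refine ((Set.finite_range (f k).2).preimage Subtype.val_injective.injOn).subset ?_
    rintro a rfl
    exact hb a

end Components

theorem SimpleGraph.Preconnected.exists_eq_of_le_of_le {W : Type*} {H : SimpleGraph W}
    (hH : H.Preconnected) {t : W → ℕ} (ht : ∀ a b, H.Adj a b → Nat.dist (t a) (t b) ≤ 1)
    {u w : W} {r : ℕ} (hu : t u ≤ r) (hw : r ≤ t w) : ∃ z, t z = r := by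
  by_contra! hne
  obtain ⟨d, -, hd₁, hd₂⟩ := (hH u w).some.exists_boundary_dart {z | t z < r}
    (lt_of_le_of_ne hu (hne u)) (not_lt.mpr hw)
  have hd : Nat.dist (t d.fst) (t d.snd) ≤ 1 := ht _ _ d.adj
  have : t d.snd ≠ r := hne d.snd
  change t d.fst < r at hd₁
  change ¬ t d.snd < r at hd₂
  unfold Nat.dist at hd
  omega

section PathAge

variable {V : Type*} {G : SimpleGraph V}

theorem eq_or_eq_or_eq_of_adj_of_embeds_pathG
    (hage : ∀ A : Set V, A.Finite → ∃ m, Nonempty (G.induce A ↪g pathG m))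
    {v a b c : V} (ha : G.Adj v a) (hb : G.Adj v b) (hc : G.Adj v c) : a = b ∨ a = c ∨ b = c := by
  let A : Set V := {v, a, b, c}
  obtain ⟨m, ⟨g⟩⟩ := hage A (Set.toFinite _)
  let t (x : V) (hx : x ∈ A) : ℕ := g ⟨x, hx⟩
  have hinj {x y : V} (hx hy) (h : t x hx = t y hy) : x = y :=
    congrArg Subtype.val (g.injective (Fin.ext h))
  have hv : v ∈ A := by simp [A]
  have ha' : a ∈ A := by simp [A]
  have hb' : b ∈ A := by simp [A]
  have hc' : c ∈ A := by simp [A]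
  have h₁ : Nat.dist (t v hv) (t a ha') = 1 := g.map_adj_iff.mpr ha
  have h₂ : Nat.dist (t v hv) (t b hb') = 1 := g.map_adj_iff.mpr hb
  have h₃ : Nat.dist (t v hv) (t c hc') = 1 := g.map_adj_iff.mpr hc
  -- Only two naturals lie at distance one from `t v hv`.
  unfold Nat.dist at h₁ h₂ h₃
  have : t a ha' = t b hb' ∨ t a ha' = t c hc' ∨ t b hb' = t c hc' := by omega
  exact this.imp (hinj _ _) (Or.imp (hinj _ _) (hinj _ _))

theorem neighborSet_finite_of_embeds_pathG
    (hage : ∀ A : Set V, A.Finite → ∃ m, Nonempty (G.induce A ↪g pathG m)) (v : V) :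
    (G.neighborSet v).Finite := by
  classical
  by_contra hinf
  obtain ⟨s, hs, hcard⟩ := Set.Infinite.exists_subset_card_eq hinf 3
  obtain ⟨a, b, c, hab, hac, hbc, rfl⟩ := Finset.card_eq_three.mp hcard
  have hsub : ∀ x ∈ ({a, b, c} : Finset V), G.Adj v x := fun x hx => hs hx
  rcases eq_or_eq_or_eq_of_adj_of_embeds_pathG hage (hsub a (by simp)) (hsub b (by simp))
    (hsub c (by simp)) with h | h | h <;> contradiction

theorem isPathOn_of_connected_induce (S : Set V) (hS : (G.induce S).Connected) {m : ℕ}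
    (g : G.induce S ↪g pathG m) : ∃ n, IsPathOn G S n := by
  have : Nonempty S := hS.nonempty
  have : Finite S := Finite.of_injective g g.injective
  let t : S → ℕ := fun s => g s
  have ht : ∀ s s', (G.induce S).Adj s s' ↔ Nat.dist (t s) (t s') = 1 := fun _ _ =>
    g.map_adj_iff.symm
  have htinj : Function.Injective t := fun _ _ h => g.injective (Fin.ext h)
  obtain ⟨u, hu⟩ := Finite.exists_min t
  obtain ⟨w, hw⟩ := Finite.exists_max t
  have huw := hu w
  have hfill : ∀ i : Fin (t w - t u + 1), ∃ s, t s = t u + i := fun i =>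
    hS.preconnected.exists_eq_of_le_of_le (fun a b h => ((ht a b).mp h).le)
      (u := u) (w := w) (Nat.le_add_right _ _) (by have := i.isLt; omega)
  choose σ hσ using hfill
  refine ⟨t w - t u, fun i => σ i, fun i j h => Fin.ext ?_, ?_, fun i j => ?_⟩
  · have := congrArg t (Subtype.ext h)
    rw [hσ, hσ] at this
    omega
  · refine Set.Subset.antisymm (Set.range_subset_iff.mpr fun i => (σ i).2) fun v hv => ?_
    have h₁ := hu ⟨v, hv⟩
    have h₂ := hw ⟨v, hv⟩
    refine ⟨⟨t ⟨v, hv⟩ - t u, by omega⟩, show ((σ _ : S) : V) = (⟨v, hv⟩ : S) from ?_⟩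
    exact congrArg Subtype.val (htinj (by rw [hσ, Fin.val_mk]; omega))
  · rw [← induce_adj, ht, hσ, hσ, Nat.dist_add_add_left]

theorem isPathOn_supp_of_embeds_pathG
    (hage : ∀ A : Set V, A.Finite → ∃ m, Nonempty (G.induce A ↪g pathG m))
    (c : G.ConnectedComponent) (hc : c.supp.Finite) : ∃ n, IsPathOn G c.supp n := by
  obtain ⟨m, ⟨g⟩⟩ := hage c.supp hc
  exact isPathOn_of_connected_induce c.supp (ConnectedComponent.maximal_connected_induce_supp c).1 g

end PathAge

theorem pathMinimal_with_path_age_is_direct_sum_of_paths {V : Type*} (G : SimpleGraph V)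
    (hmin : PathMinimal G)
    (hage : ∀ A : Set V, A.Finite → ∃ m : ℕ, Nonempty (G.induce A ↪g pathG m)) :
    (∀ c : G.ConnectedComponent, ∃ m : ℕ, IsPathOn G c.supp m) ∧
      ∀ n : ℕ, ∃ c : G.ConnectedComponent, ∃ m : ℕ, n ≤ m ∧ IsPathOn G c.supp m := by
  obtain ⟨hup, hembed⟩ := hmin
  obtain ⟨A, hupA, hfinA⟩ :=
    hup.exists_induce_forall_supp_finite (neighborSet_finite_of_embeds_pathG hage)
  obtain ⟨f⟩ := hembed A hupA
  have hpath : ∀ c : G.ConnectedComponent, ∃ m, IsPathOn G c.supp m := fun c =>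
    isPathOn_supp_of_embeds_pathG hage c (c.supp_finite_of_embedding f hfinA)
  refine ⟨hpath, fun n => ?_⟩
  obtain ⟨y, hy⟩ := hup n
  obtain ⟨m, hm⟩ := hpath (G.connectedComponentMk (y 0))
  exact ⟨_, m, hm.le_of_injective hy.1 hy.mem_supp, hm⟩
end

section
/- For the graph Ĝ_2 the diameter equals 3: any two vertices of Ĝ_2 are at graph distance at most 3, and some pair of vertices is at distance exactly 3. For every integer k ≥ 3, the diameter of Ĝ_k equals 2: any two distinct vertices are at graph distance at most 2, and some pair of vertices is at distance exactly 2. -/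
open SimpleGraph

/-!
Two vertices in different columns and non-congruent rows are adjacent, so any row `r` avoiding
the residues of both `a.2` and `b.2` yields the common neighbour `(a.1 + b.1 + 1, r)`. For `k ≥ 3`
one of the rows `a.2 + 1`, `a.2 + 2` always avoids both residues, giving diameter `2`. For `k = 2`
such a row exists only when `a.2 ≡ b.2`; otherwise a first step to `(a.1 + 1, b.2)` reduces to
that case, giving `3`, and `(0, 0)`, `(0, 3)` have no common neighbour since they lie in the same
column with rows of different parity at vertical distance `3`.
-/

theorem Nat.not_modEq_add_of_pos_of_lt {k y d : ℕ} (hd : 0 < d) (hdk : d < k) :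
    ¬ y ≡ y + d [MOD k] := by
  intro h
  have hdvd : k ∣ d := by simpa using (Nat.modEq_iff_dvd' (Nat.le_add_right y d)).mp h
  exact hd.ne' (Nat.eq_zero_of_dvd_of_lt hdvd hdk)

namespace SimpleGraph

variable {V : Type*} {G : SimpleGraph V} {u v w : V}

theorem reachable_and_dist_le_of_edist_le {n : ℕ} (h : G.edist u v ≤ n) :
    G.Reachable u v ∧ G.dist u v ≤ n := by
  have hr : G.Reachable u v := reachable_of_edist_ne_top (ne_top_of_le_ne_top (by simp) h)
  exact ⟨hr, by exact_mod_cast hr.coe_dist_eq_edist ▸ h⟩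

theorem edist_le_two_of_mem_commonNeighbors (hw : w ∈ G.commonNeighbors u v) :
    G.edist u v ≤ 2 := by
  rw [mem_commonNeighbors] at hw
  calc G.edist u v ≤ G.edist u w + G.edist w v := G.edist_triangle
    _ = 2 := by rw [edist_eq_one_iff_adj.mpr hw.1, edist_eq_one_iff_adj.mpr hw.2.symm]; rfl

end SimpleGraph

namespace Ghat

variable {k : ℕ}

theorem adj_of_ne_of_not_modEq {a b : ℕ × ℕ} (hx : a.1 ≠ b.1) (hy : ¬ a.2 ≡ b.2 [MOD k]) :
    (Ghat k).Adj a b :=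
  Or.inr ⟨hx, hy⟩

theorem edist_le_two_of_not_modEq {a b : ℕ × ℕ} (r : ℕ) (ha : ¬ a.2 ≡ r [MOD k])
    (hb : ¬ b.2 ≡ r [MOD k]) : (Ghat k).edist a b ≤ 2 :=
  edist_le_two_of_mem_commonNeighbors (w := (a.1 + b.1 + 1, r)) <| (mem_commonNeighbors _).mpr
    ⟨adj_of_ne_of_not_modEq (by simp only; omega) ha,
      adj_of_ne_of_not_modEq (by simp only; omega) hb⟩

theorem edist_le_two_of_modEq (hk : 2 ≤ k) {a b : ℕ × ℕ} (h : a.2 ≡ b.2 [MOD k]) :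
    (Ghat k).edist a b ≤ 2 := by
  have hsucc : ¬ a.2 ≡ a.2 + 1 [MOD k] := Nat.not_modEq_add_of_pos_of_lt one_pos hk
  exact edist_le_two_of_not_modEq (a.2 + 1) hsucc fun hb => hsucc (h.trans hb)

theorem edist_le_two (hk : 3 ≤ k) (a b : ℕ × ℕ) : (Ghat k).edist a b ≤ 2 := by
  have h1 : ¬ a.2 ≡ a.2 + 1 [MOD k] := Nat.not_modEq_add_of_pos_of_lt one_pos (by omega)
  have h2 : ¬ a.2 ≡ a.2 + 2 [MOD k] := Nat.not_modEq_add_of_pos_of_lt two_pos hk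
  by_cases hb : b.2 ≡ a.2 + 1 [MOD k]
  · refine edist_le_two_of_not_modEq (a.2 + 2) h2 fun hb' => ?_
    exact Nat.not_modEq_add_of_pos_of_lt one_pos (by omega) (hb.symm.trans hb')
  · exact edist_le_two_of_not_modEq (a.2 + 1) h1 hb

theorem edist_le_three (hk : 2 ≤ k) (a b : ℕ × ℕ) : (Ghat k).edist a b ≤ 3 := by
  by_cases h : a.2 ≡ b.2 [MOD k]
  · exact (edist_le_two_of_modEq hk h).trans (by norm_num)
  · let c : ℕ × ℕ := (a.1 + 1, b.2)
    calc (Ghat k).edist a b ≤ (Ghat k).edist a c + (Ghat k).edist c b := (Ghat k).edist_triangle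
      _ ≤ 1 + 2 := by
        gcongr
        · exact (edist_eq_one_iff_adj.mpr (adj_of_ne_of_not_modEq (b := c) (by simp [c]) h)).le
        · exact edist_le_two_of_modEq hk rfl
      _ = 3 := rfl

theorem dist_eq_two (hk : 2 ≤ k) : (Ghat k).dist (0, 0) (1, 0) = 2 := by
  obtain ⟨hr, hle⟩ := reachable_and_dist_le_of_edist_le
    (edist_le_two_of_modEq hk (a := (0, 0)) (b := (1, 0)) rfl)
  exact le_antisymm hle (hr.one_lt_dist_of_ne_of_not_adj (by simp) (by simp [Ghat, Nat.ModEq]))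

theorem commonNeighbors_two_eq_empty : (Ghat 2).commonNeighbors (0, 0) (0, 3) = ∅ := by
  ext ⟨x, y⟩
  simp only [mem_commonNeighbors, Ghat, Nat.dist, Nat.ModEq, Set.mem_empty_iff_false,
    iff_false]
  omega

theorem dist_two_eq_three : (Ghat 2).dist (0, 0) (0, 3) = 3 := by
  obtain ⟨hr, hle⟩ := reachable_and_dist_le_of_edist_le (edist_le_three le_rfl (0, 0) (0, 3))
  have hlt : 2 < (Ghat 2).edist (0, 0) (0, 3) :=
    two_lt_edist_iff.mpr ⟨by simp, by simp [Ghat, Nat.dist], commonNeighbors_two_eq_empty⟩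
  rw [← hr.coe_dist_eq_edist] at hlt
  exact le_antisymm hle (by exact_mod_cast hlt)

end Ghat

theorem diameter_Ghat :
    ((∀ a b : ℕ × ℕ, (Ghat 2).Reachable a b ∧ (Ghat 2).dist a b ≤ 3) ∧
      ∃ a b : ℕ × ℕ, (Ghat 2).dist a b = 3) ∧
    ∀ k : ℕ, 3 ≤ k →
      ((∀ a b : ℕ × ℕ, (Ghat k).Reachable a b ∧ (Ghat k).dist a b ≤ 2) ∧
        ∃ a b : ℕ × ℕ, (Ghat k).dist a b = 2) :=
  ⟨⟨fun a b => reachable_and_dist_le_of_edist_le (Ghat.edist_le_three le_rfl a b),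
      _, _, Ghat.dist_two_eq_three⟩,
    fun _ hk => ⟨fun a b => reachable_and_dist_le_of_edist_le (Ghat.edist_le_two hk a b),
      _, _, Ghat.dist_eq_two (by omega)⟩⟩
end

section
/- For every integer k ≥ 2 the graph Q̂_k is path-minimal, and for all integers k, k' with 2 ≤ k < k' the ages of Q̂_k and Q̂_{k'} are incomparable with respect to inclusion (neither age is contained in the other). -/
open SimpleGraph

/-!
In `Ĝ_k` with `k ≥ 2`, two vertices in different columns are adjacent iff their rows differ
mod `k`. If an induced path used an edge `ab` between two columns, every path vertex at distance
at least two from `ab` would lie in the column of `a` with the residue of `b`, or in the column of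
`b` with the residue of `a`; these vertices induce a complete bipartite graph, which has no induced
path on four vertices. Hence a long induced path of `Ĝ_k` runs through consecutive rows of a single
column.

Path-minimality: if `A` carries unbounded induced paths, it contains arbitrarily long column
intervals in arbitrarily far columns (a column `c` of `Q̂_k` has only `c + 5` rows). Relabelling
columns injectively and shifting each column by a multiple of `k` is a self-embedding of `Ĝ_k`, so
column `x` of `Q̂_k` can be sent into an interval of `A` of length `x + 4`.

Incomparability: the diagonal `(i, i)`, `i ≤ k`, is a `(k + 1)`-clique of `Q̂_{k'}`, while `Ĝ_k`
is `(k + 1)`-clique-free by pigeonhole on residues. Conversely, `Q̂_k` contains a column path with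
an apex `(n + 1, 0)` adjacent exactly to the path vertices whose row is not a multiple of `k`. In
`Ĝ_{k'}` the image of the path is a column interval; the image of the apex cannot lie in that
column (it would have three neighbours there), nor outside it (then rows `0` and `k` of the path
would be congruent mod `k'`).
-/

lemma Nat.dist_eq_one_iff {a b : ℕ} : Nat.dist a b = 1 ↔ a = b + 1 ∨ b = a + 1 := by
  unfold Nat.dist; omega

lemma Nat.ModEq.dvd_dist {k a b : ℕ} (h : a ≡ b [MOD k]) : k ∣ Nat.dist a b :=
  Nat.dvd_add h.symm.dvd' h.dvd'

lemma Nat.not_modEq_of_dist_eq_one {k a b : ℕ} (hk : 2 ≤ k) (h : Nat.dist a b = 1) :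
    ¬ a ≡ b [MOD k] := fun hab => by
  have := Nat.le_of_dvd one_pos (h ▸ hab.dvd_dist)
  omega

lemma Nat.forall_eq_add_or_forall_add_eq {n : ℕ} {y : ℕ → ℕ}
    (hstep : ∀ m < n, Nat.dist (y m) (y (m + 1)) = 1)
    (hback : ∀ m, m + 2 ≤ n → y (m + 2) ≠ y m) :
    (∀ i ≤ n, y i = y 0 + i) ∨ (∀ i ≤ n, y i + i = y 0) := by
  induction n with
  | zero => exact .inl fun i hi => by simp [Nat.le_zero.1 hi]
  | succ n ih =>
    have hlast := Nat.dist_eq_one_iff.1 (hstep n n.lt_succ_self)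
    rcases Nat.eq_zero_or_pos n with rfl | hn
    · rw [zero_add] at hlast
      rcases hlast with h | h
      · exact .inr fun i hi => by interval_cases i <;> omega
      · exact .inl fun i hi => by interval_cases i <;> omega
    · have hturn := hback (n - 1) (by omega)
      rw [show n - 1 + 2 = n + 1 by omega] at hturn
      rcases ih (fun m hm => hstep m (by omega)) (fun m hm => hback m (by omega)) with h | h
      · refine .inl fun i hi => ?_
        rcases Nat.lt_or_eq_of_le hi with hi | rfl
        · exact h i (by omega)
        · have := h n le_rfl; have := h (n - 1) (by omega); omega
      · refine .inr fun i hi => ?_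
        rcases Nat.lt_or_eq_of_le hi with hi | rfl
        · exact h i (by omega)
        · have := h n le_rfl; have := h (n - 1) (by omega); omega

namespace SimpleGraph

def Embedding.codRestrict {V W : Type*} {G : SimpleGraph V} {H : SimpleGraph W} (f : G ↪g H)
    {s : Set W} (hs : ∀ v, f v ∈ s) : G ↪g H.induce s where
  toFun v := ⟨f v, hs v⟩
  inj' _ _ h := f.injective (congrArg Subtype.val h)
  map_rel_iff' := f.map_adj_iff

end SimpleGraph

section

variable {V W : Type*} {G : SimpleGraph V} {H : SimpleGraph W} {n : ℕ} {x : Fin (n + 1) → V}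

lemma IsInducedPath.adj_iff (hx : IsInducedPath G x) (i j : Fin (n + 1)) :
    G.Adj (x i) (x j) ↔ (i : ℕ) = j + 1 ∨ (j : ℕ) = i + 1 :=
  (hx.2 i j).trans Nat.dist_eq_one_iff

lemma isInducedPath_comp_iff (f : G ↪g H) : IsInducedPath H (f ∘ x) ↔ IsInducedPath G x :=
  and_congr (f.injective.of_comp_iff x) (forall₂_congr fun _ _ => iff_congr f.map_adj_iff .rfl)

lemma AgeSubset.nonempty_embedding {ι : Type*} [Finite ι] {F : SimpleGraph ι} (h : AgeSubset G H)
    (f : F ↪g G) : Nonempty (F ↪g H) := by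
  obtain ⟨n, ⟨e⟩⟩ := Finite.exists_equiv_fin ι
  obtain ⟨g⟩ := h n (F.map e.toEmbedding) ⟨f.comp (Iso.map e F).symm.toEmbedding⟩
  exact ⟨g.comp (Iso.map e F).toEmbedding⟩

end

namespace Ghat

variable {k : ℕ} {a b z z' : ℕ × ℕ}

lemma adj_of_fst_eq (h : a.1 = b.1) : (Ghat k).Adj a b ↔ Nat.dist a.2 b.2 = 1 := by
  simp [Ghat, h]

lemma adj_of_fst_ne (h : a.1 ≠ b.1) : (Ghat k).Adj a b ↔ ¬ a.2 ≡ b.2 [MOD k] := by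
  simp [Ghat, h]

lemma not_adj_of_modEq (hk : 2 ≤ k) (h : a.2 ≡ b.2 [MOD k]) : ¬ (Ghat k).Adj a b := by
  rintro (⟨-, hd⟩ | ⟨-, hm⟩)
  · exact Nat.not_modEq_of_dist_eq_one hk hd h
  · exact hm h

lemma cliqueFree (hk : 2 ≤ k) : (Ghat k).CliqueFree (k + 1) := by
  intro s hs
  obtain ⟨a, ha, b, hb, hab, hmod⟩ := Finset.exists_ne_map_eq_of_card_lt_of_maps_to
    (s := s) (t := Finset.range k) (f := fun v : ℕ × ℕ => v.2 % k) (by simp [hs.card_eq])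
    fun v _ => Finset.mem_range.2 (Nat.mod_lt _ (by omega))
  exact not_adj_of_modEq hk hmod (hs.isClique ha hb hab)

lemma fst_eq_and_modEq_or_of_not_adj (hab : (Ghat k).Adj a b) (hcol : a.1 ≠ b.1)
    (hz : ¬ (Ghat k).Adj z a ∧ ¬ (Ghat k).Adj z b) :
    (z.1 = a.1 ∧ z.2 ≡ b.2 [MOD k]) ∨ (z.1 = b.1 ∧ z.2 ≡ a.2 [MOD k]) := by
  by_cases hza : z.1 = a.1
  · exact .inl ⟨hza, not_not.1 <| (adj_of_fst_ne (hza ▸ hcol)).not.1 hz.2⟩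
  have hza' : z.2 ≡ a.2 [MOD k] := not_not.1 <| (adj_of_fst_ne hza).not.1 hz.1
  by_cases hzb : z.1 = b.1
  · exact .inr ⟨hzb, hza'⟩
  · exact absurd (hza'.symm.trans (not_not.1 <| (adj_of_fst_ne hzb).not.1 hz.2))
      ((adj_of_fst_ne hcol).1 hab)

lemma adj_iff_of_anticomplete_cross_edge (hk : 2 ≤ k) (hab : (Ghat k).Adj a b)
    (hcol : a.1 ≠ b.1) (hz : ¬ (Ghat k).Adj z a ∧ ¬ (Ghat k).Adj z b)
    (hz' : ¬ (Ghat k).Adj z' a ∧ ¬ (Ghat k).Adj z' b) :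
    (Ghat k).Adj z z' ↔ (z.1 = a.1 ↔ z'.1 ≠ a.1) := by
  have hres := (adj_of_fst_ne hcol).1 hab
  rcases fst_eq_and_modEq_or_of_not_adj hab hcol hz with ⟨h1, h2⟩ | ⟨h1, h2⟩ <;>
    rcases fst_eq_and_modEq_or_of_not_adj hab hcol hz' with ⟨h1', h2'⟩ | ⟨h1', h2'⟩
  · exact iff_of_false (not_adj_of_modEq hk (h2.trans h2'.symm)) (by simp [h1, h1'])
  · refine iff_of_true ((adj_of_fst_ne (by rw [h1, h1']; exact hcol)).2 fun h => ?_)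
      (by simp [h1, h1', Ne.symm hcol])
    exact hres (h2'.symm.trans (h.symm.trans h2))
  · refine iff_of_true ((adj_of_fst_ne (by rw [h1, h1']; exact hcol.symm)).2 fun h => ?_)
      (by simp [h1, h1', Ne.symm hcol])
    exact hres (h2.symm.trans (h.trans h2'))
  · exact iff_of_false (not_adj_of_modEq hk (h2.trans h2'.symm)) (by simp [h1, h1', Ne.symm hcol])

variable {n : ℕ} {p : Fin (n + 1) → ℕ × ℕ}

lemma fst_eq_of_isInducedPath (hk : 2 ≤ k) (hp : IsInducedPath (Ghat k) p) (hn : 10 ≤ n)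
    (i : Fin (n + 1)) : (p i).1 = (p 0).1 := by
  have hstep : ∀ i : Fin n, (p i.castSucc).1 = (p i.succ).1 := by
    intro i
    by_contra hcol
    have hab : (Ghat k).Adj (p i.castSucc) (p i.succ) := (hp.adj_iff _ _).2 (by simp)
    -- four consecutive path vertices at distance at least two from the edge
    obtain ⟨j, hj, hfar⟩ : ∃ j, j + 3 ≤ n ∧ (j + 5 ≤ i ∨ i + 3 ≤ j) :=
      if h : 5 ≤ (i : ℕ) then ⟨0, by omega, by omega⟩ else ⟨i + 3, by omega, by omega⟩
    let q : ℕ → Fin (n + 1) := fun t => Fin.clamp (j + t) n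
    have hq : ∀ t ≤ 3, ¬ (Ghat k).Adj (p (q t)) (p i.castSucc) ∧
        ¬ (Ghat k).Adj (p (q t)) (p i.succ) := fun t ht =>
      ⟨by rw [hp.adj_iff]; simp [q]; omega, by rw [hp.adj_iff]; simp [q]; omega⟩
    have hbip : ∀ s ≤ 3, ∀ t ≤ 3, (Ghat k).Adj (p (q s)) (p (q t)) ↔
        ((p (q s)).1 = (p i.castSucc).1 ↔ (p (q t)).1 ≠ (p i.castSucc).1) := fun s hs t ht =>
      adj_iff_of_anticomplete_cross_edge hk hab hcol (hq s hs) (hq t ht)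
    have hpath : ∀ s ≤ 3, ∀ t ≤ 3,
        (Ghat k).Adj (p (q s)) (p (q t)) ↔ s = t + 1 ∨ t = s + 1 :=
      fun s hs t ht => (hp.adj_iff _ _).trans (by simp [q]; omega)
    have h01 := (hbip 0 (by omega) 1 (by omega)).1 ((hpath 0 (by omega) 1 (by omega)).2 (by omega))
    have h12 := (hbip 1 (by omega) 2 (by omega)).1 ((hpath 1 (by omega) 2 (by omega)).2 (by omega))
    have h23 := (hbip 2 (by omega) 3 (by omega)).1 ((hpath 2 (by omega) 3 (by omega)).2 (by omega))
    have h03 := (hbip 0 (by omega) 3 (by omega)).not.1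
      ((hpath 0 (by omega) 3 (by omega)).not.2 (by omega))
    tauto
  induction i using Fin.induction with
  | zero => rfl
  | succ i ih => rw [← hstep i, ih]

lemma snd_of_isInducedPath (hk : 2 ≤ k) (hp : IsInducedPath (Ghat k) p) (hn : 10 ≤ n) :
    (∀ i : Fin (n + 1), (p i).2 = (p 0).2 + i) ∨
      (∀ i : Fin (n + 1), (p i).2 + i = (p 0).2) := by
  have hcol := fst_eq_of_isInducedPath hk hp hn
  have hrow : ∀ i j, Nat.dist (p i).2 (p j).2 = 1 ↔ (i : ℕ) = j + 1 ∨ (j : ℕ) = i + 1 :=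
    fun i j => (adj_of_fst_eq ((hcol i).trans (hcol j).symm)).symm.trans (hp.adj_iff i j)
  have hrow_inj : ∀ i j, (p i).2 = (p j).2 → i = j :=
    fun i j h => hp.1 (Prod.ext ((hcol i).trans (hcol j).symm) h)
  have hclamp : ∀ i : Fin (n + 1), Fin.clamp i n = i := fun i => Fin.ext (by simp; omega)
  have hclamp₀ : Fin.clamp 0 n = 0 := Fin.ext (by simp)
  rcases Nat.forall_eq_add_or_forall_add_eq (n := n) (y := fun m => (p (Fin.clamp m n)).2)
    (fun m hm => (hrow _ _).2 (by simp; omega))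
    (fun m hm h => by have := congrArg Fin.val (hrow_inj _ _ h); simp at this; omega) with h | h
  · exact .inl fun i => by simpa [hclamp, hclamp₀] using h i (by omega)
  · exact .inr fun i => by simpa [hclamp, hclamp₀] using h i (by omega)

lemma exists_interval_of_isInducedPath (hk : 2 ≤ k) (hp : IsInducedPath (Ghat k) p)
    (hn : 10 ≤ n) : ∃ c a, ∀ i ≤ n, (c, a + i) ∈ Set.range p := by
  have hcol := fst_eq_of_isInducedPath hk hp hn
  rcases snd_of_isInducedPath hk hp hn with h | h
  · exact ⟨(p 0).1, (p 0).2, fun i hi => ⟨⟨i, by omega⟩, Prod.ext (hcol _) (h _)⟩⟩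
  · refine ⟨(p 0).1, (p 0).2 - n,
      fun i hi => ⟨⟨n - i, by omega⟩, Prod.ext (hcol _) ?_⟩⟩
    have := h ⟨n - i, by omega⟩
    have := h (Fin.last n)
    simp only [Fin.val_last] at *
    omega

lemma not_forall_adj_iff_not_dvd {k' : ℕ} (hk : 2 ≤ k) (hkk : k < k')
    (hp : IsInducedPath (Ghat k') p) (hn : 10 ≤ n) (hkn : 2 * k + 1 ≤ n) (w : ℕ × ℕ) :
    ¬ ∀ i : Fin (n + 1), (Ghat k').Adj w (p i) ↔ ¬ k ∣ i := by
  intro hw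
  have hcol := fst_eq_of_isInducedPath (by omega) hp hn
  have hrow := snd_of_isInducedPath (by omega) hp hn
  let q : ℕ → Fin (n + 1) := fun t => Fin.clamp t n
  by_cases hwcol : w.1 = (p 0).1
  · -- `w` would have three neighbours in its own column, with rows pairwise at least `k` apart
    have hnb : ∀ m ≤ 2, Nat.dist w.2 (p (q (k * m + 1))).2 = 1 := fun m hm =>
      (adj_of_fst_eq (hwcol.trans (hcol _).symm)).1 <| (hw _).2 <| by
        simp only [q, Fin.coe_clamp, min_eq_left (show k * m + 1 ≤ n by nlinarith)]
        rw [Nat.dvd_add_right (dvd_mul_right k m), Nat.dvd_one]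
        omega
    have h0 := hnb 0 (by omega)
    have h1 := hnb 1 (by omega)
    have h2 := hnb 2 (by omega)
    rcases hrow with h | h <;>
    · have := h (q (k * 0 + 1)); have := h (q (k * 1 + 1)); have := h (q (k * 2 + 1))
      simp only [q, Fin.coe_clamp, Nat.dist] at *
      omega
  · have hmod : ∀ m ≤ 1, w.2 ≡ (p (q (k * m))).2 [MOD k'] := fun m hm =>
      not_not.1 <| (adj_of_fst_ne fun h => hwcol (h.trans (hcol _))).not.1 <| (hw _).not.2 <| by
        simp [q, Fin.coe_clamp, min_eq_left (show k * m ≤ n by nlinarith)]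
    have hdvd := ((hmod 0 (by omega)).symm.trans (hmod 1 (by omega))).dvd_dist
    have hdist : Nat.dist (p (q (k * 0))).2 (p (q (k * 1))).2 = k := by
      rcases hrow with h | h <;>
      · have := h (q (k * 0)); have := h (q (k * 1))
        simp only [q, Fin.coe_clamp, Nat.dist] at *
        omega
    have := Nat.le_of_dvd (by omega) (hdist ▸ hdvd)
    omega

lemma isInducedPath_column (k c n : ℕ) :
    IsInducedPath (Ghat k) (fun i : Fin (n + 1) => (c, (i : ℕ))) :=
  ⟨fun _ _ h => Fin.ext (congrArg Prod.snd h), fun _ _ => adj_of_fst_eq rfl⟩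

def columnShift {col : ℕ → ℕ} (hcol : col.Injective) {off : ℕ → ℕ}
    (hoff : ∀ x, k ∣ off x) : Ghat k ↪g Ghat k where
  toFun v := (col v.1, off v.1 + v.2)
  inj' u v h := by
    have h₁ : u.1 = v.1 := hcol (congrArg Prod.fst h)
    have h₂ := congrArg Prod.snd h
    simp only [h₁] at h₂
    exact Prod.ext h₁ (by omega)
  map_rel_iff' {u v} := by
    change (Ghat k).Adj (col u.1, off u.1 + u.2) (col v.1, off v.1 + v.2) ↔ _
    by_cases h : u.1 = v.1
    · rw [adj_of_fst_eq (congrArg col h), adj_of_fst_eq h, h, Nat.dist_add_add_left]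
    · have hoff' := (Nat.modEq_zero_iff_dvd.2 (hoff u.1)).trans
        (Nat.modEq_zero_iff_dvd.2 (hoff v.1)).symm
      rw [adj_of_fst_ne (hcol.ne h), adj_of_fst_ne h]
      exact not_congr ⟨hoff'.add_left_cancel, hoff'.add⟩

end Ghat

namespace Qhat

variable {k k' : ℕ}

lemma hasUnboundedPaths (k : ℕ) : HasUnboundedPaths (Qhat k) := fun n =>
  ⟨fun i => ⟨(n, i), show (i : ℕ) < n + 5 by omega⟩,
    (isInducedPath_comp_iff (Embedding.induce Qset)).1 (Ghat.isInducedPath_column k n n)⟩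

lemma exists_column_interval (hk : 2 ≤ k) {A : Set Qset}
    (hA : HasUnboundedPaths ((Qhat k).induce A)) (len N : ℕ) :
    ∃ c > N, ∃ a, k ∣ a ∧ ∀ i ≤ len, (c, a + i) ∈ Subtype.val '' A := by
  obtain ⟨x, hx⟩ := hA (len + k + N + 10)
  obtain ⟨c, a, hca⟩ := Ghat.exists_interval_of_isInducedPath hk
    ((isInducedPath_comp_iff ((Embedding.induce Qset).comp (Embedding.induce A))).2 hx) (by omega)
  have hmem : ∀ i ≤ len + k + N + 10, (c, a + i) ∈ Subtype.val '' A := fun i hi => by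
    obtain ⟨j, hj⟩ := hca i hi
    exact ⟨x j, (x j).2, hj⟩
  have hc : a + (len + k + N + 10) < c + 5 := by
    obtain ⟨v, -, hv⟩ := hmem _ le_rfl
    simpa [hv, Qset] using v.2
  have hdvd : k ∣ a + (k - a % k) := ⟨a / k + 1, by
    have := Nat.div_add_mod a k
    have := Nat.mod_lt a (show 0 < k by omega)
    rw [mul_add, mul_one]
    omega⟩
  refine ⟨c, by omega, a + (k - a % k), hdvd, fun i hi => ?_⟩
  rw [add_assoc]
  exact hmem _ (by omega)

lemma nonempty_embedding_of_column_intervals {A : Set Qset}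
    (hA : ∀ len N, ∃ c > N, ∃ a, k ∣ a ∧ ∀ i ≤ len, (c, a + i) ∈ Subtype.val '' A) :
    Nonempty (Qhat k ↪g (Qhat k).induce A) := by
  obtain ⟨col, hcol, hint⟩ := Filter.extraction_forall_of_frequently
    (P := fun x c => ∃ a, k ∣ a ∧ ∀ i ≤ x + 4, (c, a + i) ∈ Subtype.val '' A)
    fun x => Filter.frequently_atTop'.2 fun N => hA (x + 4) N
  choose off hoff hmem using hint
  have hψ : ∀ v : Qset, Ghat.columnShift hcol.injective hoff v ∈ Subtype.val '' A := fun v =>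
    hmem v.1.1 v.1.2 (by have : v.1.2 < v.1.1 + 5 := v.2; omega)
  exact ⟨(((Ghat.columnShift hcol.injective hoff).comp (Embedding.induce Qset)).codRestrict
    fun v => Set.image_val_subset (hψ v)).codRestrict fun v => Set.mem_of_mem_image_val (hψ v)⟩

theorem pathMinimal (hk : 2 ≤ k) : PathMinimal (Qhat k) :=
  ⟨hasUnboundedPaths k, fun _ hA =>
    nonempty_embedding_of_column_intervals (exists_column_interval hk hA)⟩

lemma cliqueFree (hk : 2 ≤ k) : (Qhat k).CliqueFree (k + 1) :=
  (Ghat.cliqueFree hk).comap (Embedding.induce Qset).isContained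

lemma nonempty_top_embedding (hkk : k < k') :
    Nonempty ((⊤ : SimpleGraph (Fin (k + 1))) ↪g Qhat k') := by
  refine ⟨⟨⟨fun i => ⟨(i, i), show (i : ℕ) < i + 5 by omega⟩, fun i j h => ?_⟩,
    fun {i j} => ?_⟩⟩
  · exact Fin.ext (congrArg (fun v : Qset => v.1.1) h)
  · change (Ghat k').Adj (i, i) (j, j) ↔ i ≠ j
    by_cases h : i = j
    · simp [h]
    · have h' : (i : ℕ) ≠ j := Fin.val_ne_of_ne h
      exact iff_of_true ((Ghat.adj_of_fst_ne h').2 fun hm =>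
        h' (hm.eq_of_lt_of_lt (by omega) (by omega))) h

def columnWithApex (n : ℕ) : Option (Fin (n + 1)) ↪ Qset where
  toFun o := o.elim ⟨(n + 1, 0), show 0 < n + 1 + 5 by omega⟩
    fun i => ⟨(n, i), show (i : ℕ) < n + 5 by omega⟩
  inj' := by
    rintro (_ | i) (_ | j) h <;> rw [Subtype.ext_iff] at h <;> simp at h ⊢
    exact Fin.ext h

lemma isInducedPath_some_columnWithApex (k n : ℕ) :
    IsInducedPath ((Qhat k).comap (columnWithApex n)) some :=
  (isInducedPath_comp_iff (Embedding.comap _ _)).1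
    ((isInducedPath_comp_iff (Embedding.induce Qset)).1 (Ghat.isInducedPath_column k n n))

lemma comap_columnWithApex_adj_none_some {n : ℕ} (i : Fin (n + 1)) :
    ((Qhat k).comap (columnWithApex n)).Adj none (some i) ↔ ¬ k ∣ i :=
  (Ghat.adj_of_fst_ne (show n + 1 ≠ n by omega)).trans
    (not_congr (Nat.ModEq.comm.trans Nat.modEq_zero_iff_dvd))

lemma not_ageSubset_of_lt (hk : 2 ≤ k) (hkk : k < k') : ¬ AgeSubset (Qhat k) (Qhat k') := by
  intro h
  obtain ⟨f⟩ := h.nonempty_embedding (Embedding.comap (columnWithApex (2 * k + 10)) (Qhat k))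
  let g := (Embedding.induce Qset).comp f
  exact Ghat.not_forall_adj_iff_not_dvd hk hkk
    ((isInducedPath_comp_iff g).2 (isInducedPath_some_columnWithApex k _)) (by omega) (by omega)
    (g none) fun i => g.map_adj_iff.trans (comap_columnWithApex_adj_none_some i)

lemma not_ageSubset_of_gt (hk : 2 ≤ k) (hkk : k < k') : ¬ AgeSubset (Qhat k') (Qhat k) := by
  intro h
  obtain ⟨f⟩ := h _ ⊤ (nonempty_top_embedding hkk)
  exact f.isContained.not_cliqueFree (cliqueFree hk)

end Qhat

theorem Qhat_pathMinimal_and_incomparable_ages :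
    (∀ k : ℕ, 2 ≤ k → PathMinimal (Qhat k)) ∧
      ∀ k k' : ℕ, 2 ≤ k → k < k' →
        ¬ AgeSubset (Qhat k) (Qhat k') ∧ ¬ AgeSubset (Qhat k') (Qhat k) :=
  ⟨fun _ hk => Qhat.pathMinimal hk,
    fun _ _ hk hkk => ⟨Qhat.not_ageSubset_of_lt hk hkk, Qhat.not_ageSubset_of_gt hk hkk⟩⟩
end

section
/- For every integer k ≥ 2 the graph Q̂_k is prime: every module of Q̂_k is trivial, i.e., every module is empty, a singleton, or the whole vertex set {(n, m) ∈ ℕ × ℕ : m < n + 5}. -/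
open SimpleGraph

/-!
Every column `{x} × [0, x + 5)` of `Q̂_k` induces a path on at least five vertices, and such
paths are prime, so a module meeting a column in two vertices contains the whole column. A module
containing a whole column also contains the vertices at heights `0` and `1` of every other
column, since each of them sees exactly one of the two vertices of the full column at those
heights; hence it contains every column.

So it suffices to find two vertices of a common column in a module `M` that has two distinct
vertices `a`, `b` in different columns. If their heights are incongruent mod `k`, a vertex of a
third column at the height of `a` sees `b` but not `a`, and vice versa. If they are congruent, a
vertex of the column of `a` at distance `2` or `3` from `a`, of another residue, sees `b` but
not `a`.
-/

/-- Move by `2`, or by `3` when `k = 2`, in whichever direction stays below `n`. -/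
theorem Nat.exists_lt_dist_ne_one_not_modEq {k n y : ℕ} (hk : 2 ≤ k) (hn : 6 ≤ n) (hy : y < n) :
    ∃ z < n, Nat.dist z y ≠ 1 ∧ ¬ z ≡ y [MOD k] := by
  obtain ⟨d, hd, hkd⟩ : ∃ d, (d = 2 ∨ d = 3) ∧ ¬ k ∣ d := by
    by_cases h2 : k ∣ 2
    · refine ⟨3, Or.inr rfl, fun h3 => ?_⟩
      have : k = 1 := Nat.dvd_one.mp ((Nat.dvd_add_right h2).mp h3)
      omega
    · exact ⟨2, Or.inl rfl, h2⟩
  by_cases hup : y + d < n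
  · exact ⟨y + d, hup, by simp only [Nat.dist]; omega, mt Nat.add_modEq_left_iff.mp hkd⟩
  · refine ⟨y - d, by omega, by simp only [Nat.dist]; omega, fun hmod => hkd ?_⟩
    refine (Nat.add_modEq_left_iff (a := y - d)).mp ?_
    rw [Nat.sub_add_cancel (by omega : d ≤ y)]
    exact hmod.symm

namespace IsModule

variable {V W : Type*} {G : SimpleGraph V} {H : SimpleGraph W} {M : Set V}

theorem mem_of_adj_of_not_adj (hM : IsModule G M) {v p q : V} (hp : p ∈ M) (hq : q ∈ M)
    (hvp : G.Adj v p) (hvq : ¬ G.Adj v q) : v ∈ M := by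
  by_contra hv
  rcases hM v hv with h | h
  · exact hvq (h q hq)
  · exact h p hp hvp

theorem comap (f : H ↪g G) (hM : IsModule G M) : IsModule H (f ⁻¹' M) := by
  intro v hv
  simpa only [Set.mem_preimage, f.map_adj_iff] using
    (hM (f v) hv).imp (fun h x hx => h (f x) hx) (fun h x hx => h (f x) hx)

variable {n : ℕ} {S : Set (Fin n)}

theorem pathG_mem_of_dist (hS : IsModule (pathG n) S) {v p q : Fin n} (hp : p ∈ S) (hq : q ∈ S)
    (hvp : Nat.dist v p = 1) (hvq : Nat.dist v q ≠ 1) : v ∈ S :=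
  hS.mem_of_adj_of_not_adj hp hq hvp hvq

theorem pathG_eq_univ_of_succ_mem (hS : IsModule (pathG n) S) {c : ℕ} (hc : c + 1 < n)
    (h₀ : ⟨c, by omega⟩ ∈ S) (h₁ : ⟨c + 1, hc⟩ ∈ S) : S = Set.univ := by
  have up : ∀ d (hd : c + d + 1 < n), (⟨c + d, by omega⟩ : Fin n) ∈ S ∧ ⟨c + d + 1, hd⟩ ∈ S := by
    intro d
    induction d with
    | zero => exact fun _ => ⟨h₀, h₁⟩
    | succ d ih =>
      intro hd
      obtain ⟨hd₀, hd₁⟩ := ih (by omega)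
      exact ⟨hd₁, hS.pathG_mem_of_dist (v := ⟨c + d + 2, hd⟩) hd₁ hd₀
        (by simp [Nat.dist]) (by simp [Nat.dist])⟩
  have down : ∀ d ≤ c, (⟨c - d, by omega⟩ : Fin n) ∈ S ∧ ⟨c - d + 1, by omega⟩ ∈ S := by
    intro d
    induction d with
    | zero => exact fun _ => ⟨h₀, h₁⟩
    | succ d ih =>
      intro hd
      obtain ⟨hd₀, hd₁⟩ := ih (by omega)
      have hv : (⟨c - (d + 1), by omega⟩ : Fin n) ∈ S :=
        hS.pathG_mem_of_dist hd₀ hd₁ (by simp only [Nat.dist]; omega)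
          (by simp only [Nat.dist]; omega)
      exact ⟨hv, by convert hd₀ using 2; omega⟩
  refine Set.eq_univ_of_forall fun ⟨m, hm⟩ => ?_
  rcases le_or_gt c m with hcm | hmc
  · by_cases hlast : m + 1 < n
    · simpa [Nat.add_sub_cancel' hcm] using (up (m - c) (by omega)).1
    · simpa [show c + (m - 1 - c) + 1 = m by omega] using (up (m - 1 - c) (by omega)).2
  · simpa [Nat.sub_sub_self hmc.le] using (down (c - m) (by omega)).1

theorem pathG_eq_univ_of_lt (hn : 4 ≤ n) (hS : IsModule (pathG n) S) {i j : Fin n} (hi : i ∈ S)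
    (hj : j ∈ S) (hij : i < j) : S = Set.univ := by
  obtain ⟨i, hin⟩ := i
  obtain ⟨j, hjn⟩ := j
  change i < j at hij
  rcases Nat.lt_trichotomy j (i + 2) with hj2 | rfl | hj2
  · obtain rfl : j = i + 1 := by omega
    exact hS.pathG_eq_univ_of_succ_mem hjn hi hj
  · rcases Nat.eq_zero_or_pos i with rfl | hi0
    · have h3 : (⟨3, by omega⟩ : Fin n) ∈ S :=
        hS.pathG_mem_of_dist hj hi (by simp [Nat.dist]) (by simp [Nat.dist])
      exact hS.pathG_eq_univ_of_succ_mem (c := 2) (by omega) hj h3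
    · have hprev : (⟨i - 1, by omega⟩ : Fin n) ∈ S :=
        hS.pathG_mem_of_dist hi hj (by simp only [Nat.dist]; omega)
          (by simp only [Nat.dist]; omega)
      exact hS.pathG_eq_univ_of_succ_mem (c := i - 1) (by omega) hprev
        (by convert hi using 2; omega)
  · have hnext : (⟨i + 1, by omega⟩ : Fin n) ∈ S :=
      hS.pathG_mem_of_dist hi hj (by simp [Nat.dist]) (by simp only [Nat.dist]; omega)
    exact hS.pathG_eq_univ_of_succ_mem _ hi hnext

end IsModule

theorem mem_Qset {p : ℕ × ℕ} : p ∈ Qset ↔ p.2 < p.1 + 5 := Iff.rfl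

namespace Qhat

variable {k : ℕ}

theorem adj_of_fst_eq {a b : Qset} (h : a.1.1 = b.1.1) :
    (Qhat k).Adj a b ↔ Nat.dist a.1.2 b.1.2 = 1 := by
  change (_ ∧ _) ∨ (_ ∧ _) ↔ _
  simp [h]

theorem adj_of_fst_ne {a b : Qset} (h : a.1.1 ≠ b.1.1) :
    (Qhat k).Adj a b ↔ ¬ a.1.2 ≡ b.1.2 [MOD k] := by
  change (_ ∧ _) ∨ (_ ∧ _) ↔ _
  simp [h]

theorem not_adj_of_snd_eq {a b : Qset} (h : a.1.2 = b.1.2) : ¬ (Qhat k).Adj a b := by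
  rintro (⟨-, h₂⟩ | ⟨-, h₂⟩)
  · simp [h] at h₂
  · exact h₂ (h ▸ rfl)

def columnEmbedding (k x : ℕ) : pathG (x + 5) ↪g Qhat k where
  toFun i := ⟨(x, i), i.2⟩
  inj' _ _ h := Fin.ext (congrArg (fun v : Qset => v.1.2) h)
  map_rel_iff' := adj_of_fst_eq rfl

end Qhat

namespace IsModule

variable {k : ℕ} {M : Set Qset}

theorem qhat_mem_of_fst_eq (hM : IsModule (Qhat k) M) {a b : Qset} (ha : a ∈ M) (hb : b ∈ M)
    (hab : a ≠ b) (hcol : a.1.1 = b.1.1) : ∀ v : Qset, v.1.1 = a.1.1 → v ∈ M := by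
  obtain ⟨⟨x, y⟩, hy⟩ := a
  obtain ⟨⟨x', y'⟩, hy'⟩ := b
  obtain rfl : x = x' := hcol
  have hyy' : y ≠ y' := fun h => hab (by subst h; rfl)
  have hcolumn := hM.comap (Qhat.columnEmbedding k x)
  have huniv : Qhat.columnEmbedding k x ⁻¹' M = Set.univ := by
    rcases lt_or_gt_of_ne hyy' with hlt | hlt
    · exact hcolumn.pathG_eq_univ_of_lt (by omega) (i := ⟨y, hy⟩) (j := ⟨y', hy'⟩) ha hb hlt
    · exact hcolumn.pathG_eq_univ_of_lt (by omega) (i := ⟨y', hy'⟩) (j := ⟨y, hy⟩) hb ha hlt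
  rintro ⟨⟨_, z⟩, hz⟩ rfl
  exact Set.eq_univ_iff_forall.mp huniv ⟨z, hz⟩

theorem qhat_eq_univ_of_fst_eq_mem (hk : 2 ≤ k) (hM : IsModule (Qhat k) M) {x : ℕ}
    (hx : ∀ v : Qset, v.1.1 = x → v ∈ M) : M = Set.univ := by
  have h01 : ¬ 0 ≡ 1 [MOD k] := by
    rw [Nat.ModEq, Nat.zero_mod, Nat.mod_eq_of_lt hk]
    omega
  refine Set.eq_univ_of_forall fun v => ?_
  by_cases hv : v.1.1 = x
  · exact hx v hv
  have h₀ : (⟨(v.1.1, 0), mem_Qset.mpr (by omega)⟩ : Qset) ∈ M :=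
    hM.mem_of_adj_of_not_adj (p := ⟨(x, 1), mem_Qset.mpr (by omega)⟩)
      (q := ⟨(x, 0), mem_Qset.mpr (by omega)⟩) (hx _ rfl) (hx _ rfl)
      ((Qhat.adj_of_fst_ne hv).mpr h01) (Qhat.not_adj_of_snd_eq rfl)
  have h₁ : (⟨(v.1.1, 1), mem_Qset.mpr (by omega)⟩ : Qset) ∈ M :=
    hM.mem_of_adj_of_not_adj (p := ⟨(x, 0), mem_Qset.mpr (by omega)⟩)
      (q := ⟨(x, 1), mem_Qset.mpr (by omega)⟩) (hx _ rfl) (hx _ rfl)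
      ((Qhat.adj_of_fst_ne hv).mpr fun h => h01 h.symm) (Qhat.not_adj_of_snd_eq rfl)
  exact hM.qhat_mem_of_fst_eq h₀ h₁ (by simp [Subtype.ext_iff]) rfl v rfl

theorem qhat_exists_ne_fst_eq (hk : 2 ≤ k) (hM : IsModule (Qhat k) M) {a b : Qset} (ha : a ∈ M)
    (hb : b ∈ M) (hab : a ≠ b) : ∃ c ∈ M, ∃ d ∈ M, c ≠ d ∧ c.1.1 = d.1.1 := by
  by_cases hcol : a.1.1 = b.1.1
  · exact ⟨a, ha, b, hb, hab, hcol⟩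
  by_cases hmod : a.1.2 ≡ b.1.2 [MOD k]
  · -- one of the two columns is not column `0`, so it has at least `6` heights
    wlog ha0 : a.1.1 ≠ 0 generalizing a b
    · exact this hb ha (Ne.symm hab) (Ne.symm hcol) hmod.symm (by omega)
    obtain ⟨z, hz, hdist, hzy⟩ :=
      Nat.exists_lt_dist_ne_one_not_modEq hk (by omega : 6 ≤ a.1.1 + 5) a.2
    have hc : (⟨(a.1.1, z), hz⟩ : Qset) ∈ M :=
      hM.mem_of_adj_of_not_adj hb ha
        ((Qhat.adj_of_fst_ne (a := ⟨(a.1.1, z), hz⟩) hcol).mpr fun h => hzy (h.trans hmod.symm))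
        ((Qhat.adj_of_fst_eq (a := ⟨(a.1.1, z), hz⟩) (b := a) rfl).not.mpr hdist)
    exact ⟨_, hc, a, ha, fun h => hzy (by rw [← h]), rfl⟩
  · set x := a.1.1 + b.1.1 + a.1.2 + b.1.2 + 1
    have hxa : x ≠ a.1.1 := by omega
    have hxb : x ≠ b.1.1 := by omega
    have hc : (⟨(x, a.1.2), mem_Qset.mpr (by omega)⟩ : Qset) ∈ M :=
      hM.mem_of_adj_of_not_adj hb ha ((Qhat.adj_of_fst_ne hxb).mpr hmod)
        (Qhat.not_adj_of_snd_eq rfl)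
    have hd : (⟨(x, b.1.2), mem_Qset.mpr (by omega)⟩ : Qset) ∈ M :=
      hM.mem_of_adj_of_not_adj ha hb ((Qhat.adj_of_fst_ne hxa).mpr fun h => hmod h.symm)
        (Qhat.not_adj_of_snd_eq rfl)
    exact ⟨_, hc, _, hd, fun h => hmod (congrArg (fun v : Qset => v.1.2 % k) h :), rfl⟩

end IsModule

theorem Qhat_prime (k : ℕ) (hk : 2 ≤ k) :
    ∀ M : Set Qset, IsModule (Qhat k) M → IsTrivialSet M := by
  intro M hM
  rcases M.subsingleton_or_nontrivial with hsub | ⟨a, ha, b, hb, hab⟩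
  · exact hsub.eq_empty_or_singleton.imp_right Or.inl
  obtain ⟨c, hc, d, hd, hcd, hcol⟩ := hM.qhat_exists_ne_fst_eq hk ha hb hab
  exact Or.inr (Or.inr (hM.qhat_eq_univ_of_fst_eq_mem hk (hM.qhat_mem_of_fst_eq hc hd hcd hcol)))
end

section
/- Let P be a poset and let x_0, …, x_n be an induced path in the incomparability graph Inc(P): the x_i are pairwise distinct and x_i is incomparable to x_j if and only if |i − j| = 1. If x_0 < x_n in P, then x_i < x_j for all indices i, j with j ≥ i + 2. -/
open SimpleGraph

/-!
Vertices at distance at least two on the path are distinct and non-adjacent, hence comparable.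
A reversed pair `x j < x i` with `i + 2 ≤ j` propagates outwards: if `x (j + 1) ≥ x i` then
`x j < x (j + 1)`, contradicting their incomparability, and symmetrically on the left. So a
reversed pair would force `x n < x 0`.
-/

namespace IsInducedPath

variable {α : Type*} [PartialOrder α] {n : ℕ} {x : Fin (n + 1) → α}

theorem incompRel_castSucc_succ (hx : IsInducedPath (incGraph α) x) (i : Fin n) :
    IncompRel (· ≤ ·) (x i.castSucc) (x i.succ) :=
  (hx.2 _ _).2 (by simp [Nat.dist])

theorem lt_or_gt_of_add_two_le (hx : IsInducedPath (incGraph α) x) {i j : Fin (n + 1)}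
    (hij : i.val + 2 ≤ j.val) : x i < x j ∨ x j < x i := by
  have hne : x i ≠ x j := hx.1.ne (Fin.ne_of_val_ne (by omega))
  have hcomp : ¬ IncompRel (· ≤ ·) (x i) (x j) := fun h =>
    absurd ((hx.2 i j).1 h) (by simp only [Nat.dist]; omega)
  rcases not_incompRel_iff_symmGen.1 hcomp with h | h
  · exact .inl (h.lt_of_ne hne)
  · exact .inr (h.lt_of_ne hne.symm)

theorem succ_lt_of_castSucc_lt (hx : IsInducedPath (incGraph α) x) {i : Fin (n + 1)}
    {j : Fin n} (hij : i.val + 2 ≤ j.val) (h : x j.castSucc < x i) : x j.succ < x i :=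
  (hx.lt_or_gt_of_add_two_le (j := j.succ) (by rw [Fin.val_succ]; omega)).resolve_left fun h' =>
    (hx.incompRel_castSucc_succ j).not_lt (h.trans h')

theorem lt_castSucc_of_lt_succ (hx : IsInducedPath (incGraph α) x) {i : Fin n}
    {j : Fin (n + 1)} (hij : i.val + 3 ≤ j.val) (h : x j < x i.succ) : x j < x i.castSucc :=
  (hx.lt_or_gt_of_add_two_le (i := i.castSucc) (by rw [Fin.val_castSucc]; omega)).resolve_left fun h' =>
    (hx.incompRel_castSucc_succ i).not_lt (h'.trans h)

theorem last_lt_of_lt (hx : IsInducedPath (incGraph α) x) {i j : Fin (n + 1)}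
    (hij : i.val + 2 ≤ j.val) (h : x j < x i) : x (Fin.last n) < x i := by
  induction j using Fin.reverseInduction with
  | last => exact h
  | cast j ih =>
    simp only [Fin.val_succ, Fin.val_castSucc] at ih hij
    exact ih (by omega) (hx.succ_lt_of_castSucc_lt hij h)

theorem last_lt_zero_of_last_lt (hx : IsInducedPath (incGraph α) x) {i : Fin (n + 1)}
    (hi : i.val + 2 ≤ n) (h : x (Fin.last n) < x i) : x (Fin.last n) < x 0 := by
  induction i using Fin.induction with
  | zero => exact h
  | succ i ih =>
    simp only [Fin.val_succ, Fin.val_castSucc] at ih hi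
    exact ih (by omega) (hx.lt_castSucc_of_lt_succ (by rw [Fin.val_last]; omega) h)

end IsInducedPath

theorem induced_path_in_incomparability_graph_increasing
    {α : Type*} [PartialOrder α] {n : ℕ} (x : Fin (n + 1) → α)
    (hx : IsInducedPath (incGraph α) x)
    (hends : x 0 < x (Fin.last n)) :
    ∀ i j : Fin (n + 1), i.val + 2 ≤ j.val → x i < x j := fun _ _ hij =>
  (hx.lt_or_gt_of_add_two_le hij).resolve_right fun h =>
    lt_asymm hends <| hx.last_lt_zero_of_last_lt (by omega) (hx.last_lt_of_lt hij h)
end
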